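/- arXiv:1304.0501 — 6 statements merged into one kernel-verified Lean document; each statement's English description precedes it below -/
import Mathlib

section
/- Let F_q be a finite field, let l, n be positive integers with l ≤ n, and let p : Fin l → Fin n and c : Fin (n−l) → Fin n be strictly increasing maps whose ranges are disjoint and together cover Fin n (p gives the pivot positions and c the non-pivot positions). For A ∈ F_q^{l×(n−l)} let M(A) ∈ F_q^{l×n} be the matrix with M(A)_{s,p(t)} = 1 if s = t and 0 otherwise, and M(A)_{s,c(t)} = A_{s,t}. For A, B ∈ F_q^{l×(n−l)}, let U and V be the row spaces over F_q of M(A) and M(B) respectively. Then dim(U + V) − dim(U ∩ V) = 2·rank(A − B). -/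
/-!
Subtracting rows shows that `U ⊔ V` is spanned by `V` together with the rows of `M(A) - M(B)`.
These rows vanish in the pivot columns, whereas a nonzero vector of `V` does not, since its
pivot entries are its coordinates in the basis of rows of `M(B)`. Hence
`dim (U ⊔ V) = l + rank (M(A) - M(B))`, and `rank (M(A) - M(B)) = rank (A - B)` because the
pivot columns of `M(A) - M(B)` are zero. Since `dim U = dim V = l`, we get
`dim (U ⊓ V) = l - rank (A - B)` and the claim follows.
-/

open Matrix Submodule

section Pivot

variable {R ι κ : Type*} [CommRing R] [Fintype ι] [DecidableEq ι]
  {M : Matrix ι κ R} {p : ι → κ}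

theorem Matrix.vecMul_comp_of_pivot (hM : ∀ s t, M s (p t) = if s = t then 1 else 0)
    (x : ι → R) : (x ᵥ* M) ∘ p = x := by
  ext t
  simp [vecMul, dotProduct, hM]

theorem Matrix.linearIndependent_row_of_pivot
    (hM : ∀ s t, M s (p t) = if s = t then 1 else 0) : LinearIndependent R M.row :=
  vecMul_injective_iff.1 <|
    Function.LeftInverse.injective (g := (· ∘ p)) (vecMul_comp_of_pivot hM)

theorem Matrix.disjoint_span_row_ker_funLeft_of_pivot
    (hM : ∀ s t, M s (p t) = if s = t then 1 else 0) :
    Disjoint (span R (Set.range M.row)) (LinearMap.ker (LinearMap.funLeft R R p)) := by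
  rw [← range_vecMulLinear, disjoint_def]
  rintro _ ⟨x, rfl⟩ hx
  have hx0 : x = 0 := (vecMul_comp_of_pivot hM x).symm.trans hx
  simp [hx0]

end Pivot

theorem Submodule.span_range_sup_span_range_eq_sup_span_range_sub {R M ι : Type*} [Ring R]
    [AddCommGroup M] [Module R M] (f g : ι → M) :
    span R (Set.range f) ⊔ span R (Set.range g) =
      span R (Set.range g) ⊔ span R (Set.range (f - g)) := by
  apply le_antisymm
  · refine sup_le (span_le.2 <| Set.range_subset_iff.2 fun i => ?_) le_sup_left
    rw [SetLike.mem_coe, ← sub_add_cancel (f i) (g i)]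
    exact add_mem (mem_sup_right (subset_span ⟨i, rfl⟩))
      (mem_sup_left (subset_span ⟨i, rfl⟩))
  · refine sup_le le_sup_right (span_le.2 <| Set.range_subset_iff.2 fun i => ?_)
    exact sub_mem (mem_sup_left (subset_span ⟨i, rfl⟩))
      (mem_sup_right (subset_span ⟨i, rfl⟩))

theorem Matrix.rank_submatrix_eq_of_col_eq_zero {R m n σ τ : Type*} [CommRing R] [Fintype n]
    [Fintype τ] (D : Matrix m n R) {p : σ → n} {c : τ → n}
    (hcover : Set.range p ∪ Set.range c = Set.univ) (hD : ∀ s t, D s (p t) = 0) :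
    (D.submatrix id c).rank = D.rank := by
  suffices span R (Set.range (D.submatrix id c).col) = span R (Set.range D.col) by
    rw [rank_eq_finrank_span_cols, rank_eq_finrank_span_cols, this]
  apply le_antisymm
  · exact span_mono (Set.range_subset_iff.2 fun t => ⟨c t, rfl⟩)
  · refine span_le.2 (Set.range_subset_iff.2 fun j => ?_)
    obtain ⟨t, rfl⟩ | ⟨t, rfl⟩ : j ∈ Set.range p ∪ Set.range c :=
      hcover ▸ Set.mem_univ j
    · have hzero : D.col (p t) = 0 := funext fun s => hD s t
      simp [hzero]
    · exact subset_span ⟨t, rfl⟩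

theorem Matrix.finrank_sup_sub_finrank_inf_span_row_of_pivot {K ι κ : Type*} [Field K]
    [Fintype ι] [DecidableEq ι] [Fintype κ] {M₁ M₂ : Matrix ι κ K} {p : ι → κ}
    (h₁ : ∀ s t, M₁ s (p t) = if s = t then 1 else 0)
    (h₂ : ∀ s t, M₂ s (p t) = if s = t then 1 else 0) :
    Module.finrank K ↥(span K (Set.range M₁.row) ⊔ span K (Set.range M₂.row)) -
      Module.finrank K ↥(span K (Set.range M₁.row) ⊓ span K (Set.range M₂.row)) =
      2 * (M₁ - M₂).rank := by
  set U := span K (Set.range M₁.row)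
  set V := span K (Set.range M₂.row)
  set W := span K (Set.range (M₁ - M₂).row)
  have hUV : U ⊔ V = V ⊔ W := span_range_sup_span_range_eq_sup_span_range_sub M₁ M₂
  have hW_ker : W ≤ LinearMap.ker (LinearMap.funLeft K K p) :=
    span_le.2 <| Set.range_subset_iff.2 fun i => funext fun t => by simp [h₁, h₂]
  have hVW : V ⊓ W = ⊥ :=
    ((disjoint_span_row_ker_funLeft_of_pivot h₂).mono_right hW_ker).eq_bot
  have hU : Module.finrank K U = Fintype.card ι := by
    rw [← rank_eq_finrank_span_row, (linearIndependent_row_of_pivot h₁).rank_matrix]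
  have hV : Module.finrank K V = Fintype.card ι := by
    rw [← rank_eq_finrank_span_row, (linearIndependent_row_of_pivot h₂).rank_matrix]
  have hsup : Module.finrank K ↥(U ⊔ V) = Fintype.card ι + (M₁ - M₂).rank := by
    have := finrank_sup_add_finrank_inf_eq V W
    rw [hVW, finrank_bot, add_zero] at this
    rw [hUV, this, hV, ← rank_eq_finrank_span_row]
  have := finrank_sup_add_finrank_inf_eq U V
  omega

theorem lifted_matrix_code_subspace_distance_general
    {F : Type*} [Field F] {l n : ℕ}
    (p : Fin l → Fin n) (c : Fin (n - l) → Fin n)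
    (hcover : Set.range p ∪ Set.range c = Set.univ)
    (A B : Matrix (Fin l) (Fin (n - l)) F)
    (MA MB : Matrix (Fin l) (Fin n) F)
    (hMA1 : ∀ s t, MA s (p t) = if s = t then 1 else 0)
    (hMA2 : ∀ s t, MA s (c t) = A s t)
    (hMB1 : ∀ s t, MB s (p t) = if s = t then 1 else 0)
    (hMB2 : ∀ s t, MB s (c t) = B s t)
    (U V : Submodule F (Fin n → F))
    (hU : U = Submodule.span F (Set.range fun i => MA i))
    (hV : V = Submodule.span F (Set.range fun i => MB i)) :
    Module.finrank F ↥(U ⊔ V) - Module.finrank F ↥(U ⊓ V) = 2 * (A - B).rank := by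
  have hsub : (MA - MB).submatrix id c = A - B := by
    ext s t
    simp [hMA2, hMB2]
  have hpivot : ∀ s t, (MA - MB) s (p t) = 0 := by
    simp [hMA1, hMB1]
  subst hU hV
  rw [← hsub, rank_submatrix_eq_of_col_eq_zero _ hcover hpivot]
  exact finrank_sup_sub_finrank_inf_span_row_of_pivot hMA1 hMB1

/-- **Lifted matrix codes: subspace distance is twice the rank distance.**
`F` is a finite field, `l ≤ n`, `p` enumerates the pivot locations and `c` the
non-pivot locations (both strictly increasing, with disjoint ranges covering `Fin n`).
`MA` (resp. `MB`) is the reduced-row-echelon matrix with identity in the pivot columns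
and auxiliary matrix `A` (resp. `B`) in the non-pivot columns; `U`, `V` are their row
spaces.  Then `dim (U ⊔ V) - dim (U ⊓ V) = 2 * rank (A - B)`. -/
theorem lifted_matrix_code_subspace_distance
    {F : Type*} [Field F] [Fintype F] {l n : ℕ} (hl : 0 < l) (hn : 0 < n) (hln : l ≤ n)
    (p : Fin l → Fin n) (c : Fin (n - l) → Fin n)
    (hp : StrictMono p) (hc : StrictMono c)
    (hdisj : Disjoint (Set.range p) (Set.range c))
    (hcover : Set.range p ∪ Set.range c = Set.univ)
    (A B : Matrix (Fin l) (Fin (n - l)) F)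
    (MA MB : Matrix (Fin l) (Fin n) F)
    (hMA1 : ∀ s t, MA s (p t) = if s = t then 1 else 0)
    (hMA2 : ∀ s t, MA s (c t) = A s t)
    (hMB1 : ∀ s t, MB s (p t) = if s = t then 1 else 0)
    (hMB2 : ∀ s t, MB s (c t) = B s t)
    (U V : Submodule F (Fin n → F))
    (hU : U = Submodule.span F (Set.range fun i => MA i))
    (hV : V = Submodule.span F (Set.range fun i => MB i)) :
    Module.finrank F ↥(U ⊔ V) - Module.finrank F ↥(U ⊓ V) = 2 * (A - B).rank :=
  lifted_matrix_code_subspace_distance_general p c hcover A B MA MB hMA1 hMA2 hMB1 hMB2 U V hU hV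
end

section
/- Let F_q be a finite field with q elements, K a field extension of F_q of degree m, and 1 ≤ l ≤ m. The group LEquiv of linear rank-metric-equivalence maps of K^l is isomorphic to the quotient group (K^× × GL_l(F_q))/N, where N = {(λ, λ^{-1}·I_l) : λ ∈ F_q^×}; explicitly, the map sending the class of (α, L) to the map x ↦ α·(xL) is a group isomorphism from (K^× × GL_l(F_q))/N onto LEquiv. -/
open Matrix
open scoped MatrixGroups

/-- The rank weight of `x ∈ K^l` over `F`. -/
noncomputable def rankWeight (F : Type*) {K : Type*} [Field F] [Field K] [Algebra F K]
    {l : ℕ} (x : Fin l → K) : ℕ :=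
  Module.finrank F ↥(Submodule.span F (Set.range x))

/-- The group (under composition, with maps acting on the right as in the paper) of
linear rank-metric-equivalence maps of `K^l`: invertible `K`-linear maps preserving
rank weight. -/
def LEquivRM (F K : Type*) [Field F] [Field K] [Algebra F K] (l : ℕ) :
    Subgroup ((Fin l → K) ≃ₗ[K] (Fin l → K))ᵐᵒᵖ where
  carrier := {f | ∀ x : Fin l → K, rankWeight F (f.unop x) = rankWeight F x}
  one_mem' := fun _ => rfl
  mul_mem' := by
    intro a b ha hb x
    have h1 : (a * b).unop x = b.unop (a.unop x) := rfl
    rw [h1, hb, ha]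
  inv_mem' := by
    intro a ha x
    have h2 : a.unop (a⁻¹.unop x) = x := a.unop.apply_symm_apply x
    have h3 := ha (a⁻¹.unop x)
    rw [h2] at h3
    exact h3.symm

/-- The homomorphism `F^× → K^× × GL_l(F)`, `λ ↦ (λ, λ⁻¹ • I_l)`. -/
def psiRM (F K : Type*) [Field F] [Field K] [Algebra F K] (l : ℕ) :
    Fˣ →* Kˣ × GL (Fin l) F :=
  (Units.map (algebraMap F K).toMonoidHom).prod
    ((Units.map (algebraMap F (Matrix (Fin l) (Fin l) F)).toMonoidHom).comp invMonoidHom)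

/-- The subgroup `N = {(λ, λ⁻¹ I_l) : λ ∈ F^×} ≤ K^× × GL_l(F)`. -/
def NRM (F K : Type*) [Field F] [Field K] [Algebra F K] (l : ℕ) :
    Subgroup (Kˣ × GL (Fin l) F) :=
  (psiRM F K l).range

instance NRM_normal (F K : Type*) [Field F] [Field K] [Algebra F K] (l : ℕ) :
    (NRM F K l).Normal := by
  constructor
  intro n hn g
  obtain ⟨lam, rfl⟩ := hn
  have hcomm : psiRM F K l lam * g = g * psiRM F K l lam := by
    apply Prod.ext
    · exact mul_comm _ _
    · apply Units.ext
      show ((psiRM F K l lam).2 : Matrix (Fin l) (Fin l) F) * (g.2 : Matrix (Fin l) (Fin l) F)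
        = (g.2 : Matrix (Fin l) (Fin l) F) * ((psiRM F K l lam).2 : Matrix (Fin l) (Fin l) F)
      have : ((psiRM F K l lam).2 : Matrix (Fin l) (Fin l) F)
          = algebraMap F (Matrix (Fin l) (Fin l) F) ((lam⁻¹ : Fˣ) : F) := rfl
      rw [this]
      exact Algebra.commutes _ _
  have : g * psiRM F K l lam * g⁻¹ = psiRM F K l lam := by
    rw [← hcomm]; group
  rw [this]
  exact ⟨lam, rfl⟩

/-! Scaling by `α ∈ Kˣ` and right multiplication by `L ∈ GL_l(F)` preserve the `F`-span of
the coordinates, so `(α, L) ↦ (x ↦ α • x L)` is a homomorphism into `LEquiv`.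
It is onto (Berger): a weight-preserving `f` sends `e_i` to a weight-one vector `β_i • w_i` with
`w_i ∈ F^l`, so `f x = (x diag β) W` with `W ∈ GL_l(F)`; then `β = f (1, …, 1) W⁻¹` has weight
one as well, i.e. `β = β₀ • c` with `c ∈ F^l`, and `f` is `x ↦ β₀ • x (diag c W)`.
Its kernel consists of the pairs with `α L = I`, which forces `α ∈ Fˣ` and `L = α⁻¹ I`. -/

theorem Matrix.isUnit_of_surjective_vecMul_map {ι F K : Type*} [Fintype ι] [DecidableEq ι]
    [Field F] [Field K] [Algebra F K] {A : Matrix ι ι F}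
    (h : Function.Surjective (A.map (algebraMap F K)).vecMul) : IsUnit A := by
  rw [vecMul_surjective_iff_isUnit, isUnit_iff_isUnit_det,
    ← RingHom.mapMatrix_apply, ← RingHom.map_det, isUnit_map_iff] at h
  rwa [isUnit_iff_isUnit_det]

section

variable {F K : Type*} [Field F] [Field K] [Algebra F K] {l : ℕ}

theorem rankWeight_comp_linearEquiv (g : K ≃ₗ[F] K) (x : Fin l → K) :
    rankWeight F (g ∘ x) = rankWeight F x := by
  rw [rankWeight, Set.range_comp, ← LinearEquiv.coe_toLinearMap, ← Submodule.map_span,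
    LinearEquiv.finrank_map_eq, rankWeight]

theorem rankWeight_units_smul (α : Kˣ) (x : Fin l → K) :
    rankWeight F ((α : K) • x) = rankWeight F x :=
  rankWeight_comp_linearEquiv ((LinearEquiv.smulOfUnit α).restrictScalars F) x

theorem span_range_vecMul_map_le (x : Fin l → K) (A : Matrix (Fin l) (Fin l) F) :
    Submodule.span F (Set.range (x ᵥ* A.map (algebraMap F K))) ≤
      Submodule.span F (Set.range x) := by
  rw [Submodule.span_le]
  rintro _ ⟨j, rfl⟩
  have hj : (x ᵥ* A.map (algebraMap F K)) j = ∑ i, A i j • x i := by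
    simp [Matrix.vecMul, dotProduct, Algebra.smul_def, mul_comm]
  rw [hj]
  exact Submodule.sum_mem _ fun i _ => Submodule.smul_mem _ _ (Submodule.subset_span ⟨i, rfl⟩)

theorem rankWeight_vecMul_map (x : Fin l → K) (L : GL (Fin l) F) :
    rankWeight F (x ᵥ* (L : Matrix (Fin l) (Fin l) F).map (algebraMap F K)) =
      rankWeight F x := by
  have hinv := span_range_vecMul_map_le (x ᵥ* (L : Matrix (Fin l) (Fin l) F).map (algebraMap F K))
    ((L⁻¹ : GL (Fin l) F) : Matrix (Fin l) (Fin l) F)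
  rw [vecMul_vecMul, ← Matrix.map_mul, Units.mul_inv,
    Matrix.map_one _ (map_zero _) (map_one _), vecMul_one] at hinv
  rw [rankWeight, rankWeight, le_antisymm (span_range_vecMul_map_le x _) hinv]

theorem rankWeight_algebraMap_comp_le_one (v : Fin l → F) :
    rankWeight F (algebraMap F K ∘ v) ≤ 1 := by
  have hle : Submodule.span F (Set.range (algebraMap F K ∘ v)) ≤ F ∙ (1 : K) := by
    rw [Submodule.span_le]
    rintro _ ⟨i, rfl⟩
    exact Submodule.mem_span_singleton.mpr ⟨v i, (Algebra.algebraMap_eq_smul_one _).symm⟩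
  calc rankWeight F (algebraMap F K ∘ v) ≤ Module.finrank F (F ∙ (1 : K)) :=
        Submodule.finrank_mono hle
    _ ≤ 1 := by simpa using finrank_span_le_card ({1} : Set K)

theorem exists_eq_smul_algebraMap_comp {x : Fin l → K} (hx : rankWeight F x ≤ 1) {i : Fin l}
    (hi : x i ≠ 0) : ∃ w : Fin l → F, x = x i • (algebraMap F K ∘ w) := by
  set S := Submodule.span F (Set.range x)
  have hxS : ∀ j, x j ∈ S := fun j => Submodule.subset_span ⟨j, rfl⟩
  have hS : Module.finrank F S = 1 := by
    have : FiniteDimensional F S := FiniteDimensional.span_of_finite F (Set.finite_range x)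
    refine le_antisymm hx (Module.finrank_pos_iff_exists_ne_zero.mpr ⟨⟨x i, hxS i⟩, ?_⟩)
    simpa using hi
  have hspan := eq_span_singleton_of_mem_of_finrank_eq_one hS (hxS i) hi
  choose w hw using fun j => Submodule.mem_span_singleton.mp (hspan ▸ hxS j)
  refine ⟨w, funext fun j => ?_⟩
  simp [← hw j, Algebra.smul_def, mul_comm]

noncomputable def smulVecMulEquiv (α : Kˣ) (L : GL (Fin l) F) :
    (Fin l → K) ≃ₗ[K] (Fin l → K) where
  toFun x := (α : K) • (x ᵥ* (L : Matrix (Fin l) (Fin l) F).map (algebraMap F K))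
  invFun x :=
    ((α⁻¹ : Kˣ) : K) • (x ᵥ* ((L⁻¹ : GL (Fin l) F) : Matrix (Fin l) (Fin l) F).map (algebraMap F K))
  map_add' x y := by simp [Matrix.add_vecMul]
  map_smul' c x := by simp [smul_vecMul, smul_comm c]
  left_inv x := by simp [smul_vecMul, vecMul_vecMul, smul_smul, ← Matrix.map_mul]
  right_inv x := by simp [smul_vecMul, vecMul_vecMul, smul_smul, ← Matrix.map_mul]

@[simp]
theorem smulVecMulEquiv_apply (α : Kˣ) (L : GL (Fin l) F) (x : Fin l → K) :
    smulVecMulEquiv α L x =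
      (α : K) • (x ᵥ* (L : Matrix (Fin l) (Fin l) F).map (algebraMap F K)) :=
  rfl

theorem rankWeight_smulVecMulEquiv (α : Kˣ) (L : GL (Fin l) F) (x : Fin l → K) :
    rankWeight F (smulVecMulEquiv α L x) = rankWeight F x := by
  rw [smulVecMulEquiv_apply, rankWeight_units_smul, rankWeight_vecMul_map]

theorem exists_vecMul_diagonal_mul_map_of_rankWeight_eq (f : (Fin l → K) ≃ₗ[K] (Fin l → K))
    (hf : ∀ x, rankWeight F (f x) = rankWeight F x) :
    ∃ (β : Fin l → K) (W : Matrix (Fin l) (Fin l) F), (∀ i, β i ≠ 0) ∧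
      ∀ x, f x = x ᵥ* (diagonal β * W.map (algebraMap F K)) := by
  have hrow : ∀ i, ∃ (β : K) (w : Fin l → F), β ≠ 0 ∧
      f (Pi.single i 1) = β • (algebraMap F K ∘ w) := by
    intro i
    have hsingle : Pi.single i (1 : K) = algebraMap F K ∘ Pi.single i 1 := by
      ext j; by_cases hj : j = i <;> simp [hj]
    obtain ⟨k, hk⟩ :=
      Function.ne_iff.mp (f.map_ne_zero_iff.mpr (Pi.single_ne_zero_iff.mpr one_ne_zero))
    have hrank : rankWeight F (f (Pi.single i 1)) ≤ 1 := by
      rw [hf, hsingle]; exact rankWeight_algebraMap_comp_le_one _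
    exact ⟨_, (exists_eq_smul_algebraMap_comp hrank hk).imp fun _ hw => ⟨hk, hw⟩⟩
  choose β w hβ hw using hrow
  refine ⟨β, of w, hβ, LinearMap.congr_fun (g := (diagonal β * _).vecMulLinear) ?_⟩
  ext i j
  simp [hw, diagonal_mul]

theorem exists_eq_smulVecMulEquiv_of_rankWeight_eq (hl : 0 < l)
    (f : (Fin l → K) ≃ₗ[K] (Fin l → K)) (hf : ∀ x, rankWeight F (f x) = rankWeight F x) :
    ∃ (α : Kˣ) (L : GL (Fin l) F), f = smulVecMulEquiv α L := by
  obtain ⟨β, W, hβ, hfW⟩ := exists_vecMul_diagonal_mul_map_of_rankWeight_eq f hf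
  have hWunit : IsUnit W := Matrix.isUnit_of_surjective_vecMul_map fun y =>
    ⟨f.symm y ᵥ* diagonal β,
      (vecMul_vecMul _ _ _).trans ((hfW _).symm.trans (f.apply_symm_apply y))⟩
  have hβrank : rankWeight F β ≤ 1 := by
    have hβ1 : β = f (fun _ => 1) ᵥ*
        ((hWunit.unit⁻¹ : GL (Fin l) F) : Matrix (Fin l) (Fin l) F).map (algebraMap F K) := by
      rw [hfW, vecMul_vecMul, Matrix.mul_assoc, ← Matrix.map_mul, hWunit.mul_val_inv,
        Matrix.map_one _ (map_zero _) (map_one _), Matrix.mul_one]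
      ext; simp [vecMul_diagonal]
    have hone : (fun _ => 1 : Fin l → K) = algebraMap F K ∘ fun _ => 1 := by
      ext; simp
    rw [hβ1, rankWeight_vecMul_map, hf, hone]
    exact rankWeight_algebraMap_comp_le_one _
  obtain ⟨c, hc⟩ := exists_eq_smul_algebraMap_comp hβrank (hβ ⟨0, hl⟩)
  set L := diagonal c * W
  have hfL : ∀ x, f x = β ⟨0, hl⟩ • (x ᵥ* L.map (algebraMap F K)) := by
    intro x
    rw [hfW]
    conv_lhs => rw [hc]
    simp only [L, Matrix.map_mul, diagonal_map (map_zero _), Matrix.diagonal_smul,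
      Matrix.smul_mul, vecMul_smul, Function.comp_def]
  have hLunit : IsUnit L := Matrix.isUnit_of_surjective_vecMul_map fun y =>
    ⟨β ⟨0, hl⟩ • f.symm y, by simp [smul_vecMul, ← hfL]⟩
  exact ⟨Units.mk0 _ (hβ ⟨0, hl⟩), hLunit.unit, LinearEquiv.ext hfL⟩

variable (F K l) in
noncomputable def lequivRMHom : Kˣ × GL (Fin l) F →* LEquivRM F K l :=
  MonoidHom.mk'
    (fun p => ⟨MulOpposite.op (smulVecMulEquiv p.1 p.2), rankWeight_smulVecMulEquiv p.1 p.2⟩)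
    fun p q => Subtype.ext <| MulOpposite.unop_injective <| LinearEquiv.ext fun x => by
      simp [vecMul_vecMul, smul_smul]

@[simp]
theorem coe_lequivRMHom (p : Kˣ × GL (Fin l) F) :
    (lequivRMHom F K l p : ((Fin l → K) ≃ₗ[K] (Fin l → K))ᵐᵒᵖ) =
      MulOpposite.op (smulVecMulEquiv p.1 p.2) :=
  rfl

theorem lequivRMHom_eq_one_iff (p : Kˣ × GL (Fin l) F) :
    lequivRMHom F K l p = 1 ↔
      (p.1 : K) • (p.2 : Matrix (Fin l) (Fin l) F).map (algebraMap F K) = 1 := by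
  simp only [← OneMemClass.coe_eq_one, coe_lequivRMHom, MulOpposite.op_eq_one_iff,
    LinearEquiv.ext_iff, smulVecMulEquiv_apply, ← vecMul_smul, LinearEquiv.coe_one, id]
  exact ⟨fun h => ext_of_single_vecMul fun i => by rw [h, vecMul_one],
    fun h x => by rw [h, vecMul_one]⟩

theorem mem_NRM_iff (hl : 0 < l) (p : Kˣ × GL (Fin l) F) :
    p ∈ NRM F K l ↔
      (p.1 : K) • (p.2 : Matrix (Fin l) (Fin l) F).map (algebraMap F K) = 1 := by
  constructor
  · rintro ⟨a, rfl⟩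
    ext i j
    by_cases hij : i = j <;> simp [psiRM, algebraMap_matrix_apply, Matrix.one_apply, hij]
  · intro h
    set c := (p.2 : Matrix (Fin l) (Fin l) F) ⟨0, hl⟩ ⟨0, hl⟩
    have hαc : (p.1 : K) * algebraMap F K c = 1 := by
      simpa using congr_fun₂ h ⟨0, hl⟩ ⟨0, hl⟩
    have hc : c ≠ 0 := by rintro hc; simp [hc] at hαc
    have hL : (p.2 : Matrix (Fin l) (Fin l) F) = c • 1 := by
      apply Matrix.map_injective (algebraMap F K).injective
      have hLK := (eq_inv_smul_iff₀ (Units.ne_zero p.1)).mpr h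
      rw [inv_eq_of_mul_eq_one_right hαc] at hLK
      refine hLK.trans ?_
      ext i j
      by_cases hij : i = j <;> simp [hij]
    refine ⟨(Units.mk0 c hc)⁻¹, Prod.ext (Units.ext ?_) (Units.ext ?_)⟩
    · simpa [psiRM] using inv_eq_of_mul_eq_one_left hαc
    · simpa [psiRM, hL] using Algebra.algebraMap_eq_smul_one c

theorem ker_lequivRMHom (hl : 0 < l) : (lequivRMHom F K l).ker = NRM F K l := by
  ext p
  rw [MonoidHom.mem_ker, lequivRMHom_eq_one_iff, mem_NRM_iff hl]

theorem lequivRMHom_surjective (hl : 0 < l) : Function.Surjective (lequivRMHom F K l) := by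
  rintro ⟨f, hf⟩
  obtain ⟨α, L, hαL⟩ := exists_eq_smulVecMulEquiv_of_rankWeight_eq hl f.unop hf
  exact ⟨(α, L), Subtype.ext (MulOpposite.unop_injective hαL.symm)⟩

end

theorem lequiv_rank_metric_iso_general
    (F K : Type*) [Field F] [Field K] [Algebra F K]
    (l : ℕ) (hl : 1 ≤ l) :
    ∃ e : ((Kˣ × GL (Fin l) F) ⧸ NRM F K l) ≃* (LEquivRM F K l),
      ∀ (α : Kˣ) (L : GL (Fin l) F) (x : Fin l → K),
        ((e (QuotientGroup.mk (α, L)) : ((Fin l → K) ≃ₗ[K] (Fin l → K))ᵐᵒᵖ)).unop x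
          = (α : K) • Matrix.vecMul x ((L : Matrix (Fin l) (Fin l) F).map (algebraMap F K)) :=
  ⟨(QuotientGroup.quotientMulEquivOfEq (ker_lequivRMHom hl).symm).trans
    (QuotientGroup.quotientKerEquivOfSurjective _ (lequivRMHom_surjective hl)),
    fun _ _ _ => rfl⟩

/-- **Structure of the group of linear rank-metric-equivalence maps (Prop. 3.1).**
`LEquiv(K^l) ≅ (K^× × GL_l(F))/N` where `N = {(λ, λ⁻¹ I_l) : λ ∈ F^×}`; explicitly the
class of `(α, L)` corresponds to the map `x ↦ α • (x · L)`. -/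
theorem lequiv_rank_metric_iso
    (F K : Type*) [Field F] [Fintype F] [Field K] [Algebra F K]
    (m l : ℕ) (hm : Module.finrank F K = m) (hl : 1 ≤ l) (hlm : l ≤ m) :
    ∃ e : ((Kˣ × GL (Fin l) F) ⧸ NRM F K l) ≃* (LEquivRM F K l),
      ∀ (α : Kˣ) (L : GL (Fin l) F) (x : Fin l → K),
        ((e (QuotientGroup.mk (α, L)) : ((Fin l → K) ≃ₗ[K] (Fin l → K))ᵐᵒᵖ)).unop x
          = (α : K) • Matrix.vecMul x ((L : Matrix (Fin l) (Fin l) F).map (algebraMap F K)) :=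
  lequiv_rank_metric_iso_general F K l hl
end

section
/- Let F_q be a finite field of characteristic p with q elements, K a field extension of F_q of degree m, and 1 ≤ l ≤ m. Let SLEquiv denote the group (under composition) of invertible semi-linear maps f : K^l → K^l that preserve rank weight, let LEquiv ≤ SLEquiv be the subgroup of invertible K-linear rank-weight-preserving maps, and let G ≤ SLEquiv be the subgroup of coordinatewise Galois maps {x ↦ (γ(x_1),…,γ(x_l)) : γ ∈ Gal(K/F_p)}. Then LEquiv is normal in SLEquiv, LEquiv ∩ G is trivial, and SLEquiv = LEquiv·G; that is, SLEquiv is the internal semidirect product LEquiv ⋊ Gal(K/F_p). -/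
/-- `f` is a semi-linear rank-metric-equivalence map: an additive automorphism of `K^l`
which is semi-linear for some `γ ∈ Gal(K/F_p)` and preserves rank weight. -/
def IsSemilinearRMEquiv (F : Type*) {K : Type*} [Field F] [Field K] [Algebra F K]
    {l : ℕ} (f : AddAut (Fin l → K)) : Prop :=
  (∃ γ : K ≃+* K, ∀ (c : K) (x : Fin l → K), f (c • x) = γ c • f x) ∧
  ∀ x : Fin l → K, rankWeight F (f x) = rankWeight F x

/-- `f` is a linear rank-metric-equivalence map: an additive automorphism of `K^l`
which is `K`-linear and preserves rank weight. -/
def IsLinearRMEquiv (F : Type*) {K : Type*} [Field F] [Field K] [Algebra F K]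
    {l : ℕ} (f : AddAut (Fin l → K)) : Prop :=
  (∀ (c : K) (x : Fin l → K), f (c • x) = c • f x) ∧
  ∀ x : Fin l → K, rankWeight F (f x) = rankWeight F x

/-- `f` is the coordinatewise application of some `γ ∈ Gal(K/F_p)`. -/
def IsGaloisRMMap {K : Type*} [Field K] {l : ℕ} (f : AddAut (Fin l → K)) : Prop :=
  ∃ γ : K ≃+* K, ∀ (x : Fin l → K) (i : Fin l), f x i = γ (x i)

/-!
A ring automorphism `γ` of `K` maps the image of `F_q` onto itself, because that image is exactly
the root set of `X ^ q - X`. Hence `γ` carries the `F_q`-span of the coordinates of `x` bijectively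
onto that of `γ ∘ x`; both are finite `F_q`-spaces of the same cardinality, so they have the same
dimension, and coordinatewise Galois maps preserve rank weight. Everything else is bookkeeping of
twisting automorphisms: a `γ`-semilinear map composed with a `γ⁻¹`-semilinear one is linear,
which gives both normality and the factorisation `f = (f ∘ γ⁻¹) ∘ γ` (`γ` applied
coordinatewise); and a linear Galois map satisfies `γ c = c` on the coordinates of
`c • (1, …, 1)`, so `γ = id`.
-/

open Polynomial

section FiniteScalars

variable {F K L : Type*} [Field F] [Fintype F] [Field K] [Algebra F K] [Field L] [Algebra F L]

theorem FiniteField.mem_range_algebraMap_iff_pow_card {x : K} :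
    x ∈ Set.range (algebraMap F K) ↔ x ^ Fintype.card F = x := by
  constructor
  · rintro ⟨a, rfl⟩
    rw [← map_pow, FiniteField.pow_card]
  · intro hx
    have hq : 1 < Fintype.card F := Fintype.one_lt_card
    have hroots : ((X ^ Fintype.card F - X : F[X]).map (algebraMap F K)).roots =
        Finset.univ.val.map (algebraMap F K) := by
      rw [← FiniteField.roots_X_pow_card_sub_X F, roots_map_of_injective_of_card_eq_natDegree
        (algebraMap F K).injective]
      rw [FiniteField.roots_X_pow_card_sub_X, FiniteField.X_pow_card_sub_X_natDegree_eq F hq]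
      rfl
    have hmem : x ∈ ((X ^ Fintype.card F - X : F[X]).map (algebraMap F K)).roots := by
      rw [mem_roots (by simpa using FiniteField.X_pow_card_sub_X_ne_zero K hq)]
      simp [hx]
    rw [hroots] at hmem
    obtain ⟨a, -, ha⟩ := Multiset.mem_map.mp hmem
    exact ⟨a, ha⟩

theorem RingHom.map_algebraMap_mem_range (γ : K →+* L) (a : F) :
    γ (algebraMap F K a) ∈ Set.range (algebraMap F L) := by
  rw [FiniteField.mem_range_algebraMap_iff_pow_card, ← map_pow,
    FiniteField.mem_range_algebraMap_iff_pow_card.mp ⟨a, rfl⟩]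

theorem RingHom.map_mem_span_image (γ : K →+* L) {s : Set K} {v : K}
    (hv : v ∈ Submodule.span F s) : γ v ∈ Submodule.span F (γ '' s) := by
  induction hv using Submodule.span_induction with
  | mem y hy => exact Submodule.subset_span ⟨y, hy, rfl⟩
  | zero => simp
  | add y z _ _ hy hz => rw [map_add]; exact Submodule.add_mem _ hy hz
  | smul a y _ hy =>
      obtain ⟨b, hb⟩ := γ.map_algebraMap_mem_range a
      rw [Algebra.smul_def, map_mul, ← hb, ← Algebra.smul_def]
      exact Submodule.smul_mem _ _ hy

theorem RingEquiv.coe_span_image (γ : K ≃+* L) (s : Set K) :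
    (Submodule.span F (γ '' s) : Set L) = γ '' Submodule.span F s := by
  refine subset_antisymm (fun w hw => ⟨γ.symm w, ?_, γ.apply_symm_apply w⟩)
    (Set.image_subset_iff.mpr fun v hv => (γ : K →+* L).map_mem_span_image hv)
  simpa [Set.image_image] using (γ.symm : L →+* K).map_mem_span_image hw

theorem Module.finrank_eq_of_natCard_eq {V W : Type*} [AddCommGroup V] [Module F V]
    [Module.Finite F V] [AddCommGroup W] [Module F W] [Module.Finite F W]
    (h : Nat.card V = Nat.card W) : finrank F V = finrank F W := by
  rw [Module.natCard_eq_pow_finrank (K := F) (V := V),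
    Module.natCard_eq_pow_finrank (K := F) (V := W)] at h
  exact Nat.pow_right_injective (Nat.card_eq_fintype_card (α := F) ▸ Fintype.one_lt_card) h

theorem rankWeight_ringEquiv_comp {l : ℕ} (γ : K ≃+* L) (x : Fin l → K) :
    rankWeight F (γ ∘ x) = rankWeight F x := by
  have hspan := γ.coe_span_image (F := F) (Set.range x)
  rw [← Set.range_comp] at hspan
  have := FiniteDimensional.span_of_finite F (Set.finite_range x)
  have := FiniteDimensional.span_of_finite F (Set.finite_range (γ ∘ x))
  refine Module.finrank_eq_of_natCard_eq ?_
  rw [← SetLike.coe_sort_coe, hspan, Nat.card_image_of_injective γ.injective]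
  rfl

end FiniteScalars

namespace AddAut

variable {R M : Type*} [Semiring R] [AddCommMonoid M] [Module R M] {f g : AddAut M}
  {α β : R ≃+* R}

theorem map_smul_add (hf : ∀ (c : R) (x : M), f (c • x) = α c • f x)
    (hg : ∀ (c : R) (x : M), g (c • x) = β c • g x) (c : R) (x : M) :
    (f + g) (c • x) = α (β c) • (f + g) x := by
  change f (g (c • x)) = α (β c) • f (g x)
  rw [hg, hf]

theorem map_smul_neg (hf : ∀ (c : R) (x : M), f (c • x) = α c • f x) (c : R) (x : M) :
    (-f) (c • x) = α.symm c • (-f) x :=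
  f.injective <| by
    change f (f.symm (c • x)) = f (α.symm c • f.symm x)
    rw [hf, AddEquiv.apply_symm_apply, AddEquiv.apply_symm_apply, RingEquiv.apply_symm_apply]

theorem invariant_neg {X : Type*} {φ : M → X} (hf : ∀ x, φ (f x) = φ x) (x : M) :
    φ ((-f) x) = φ x := by
  rw [← hf ((-f) x)]
  exact congrArg φ (f.apply_symm_apply x)

end AddAut

section RankMetric

variable {F K : Type*} [Field F] [Field K] [Algebra F K] {l : ℕ}

theorem IsLinearRMEquiv.conj {g n : AddAut (Fin l → K)} (hg : IsSemilinearRMEquiv F g)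
    (hn : IsLinearRMEquiv F n) : IsLinearRMEquiv F (g + n + -g) := by
  obtain ⟨⟨γ, hγ⟩, hgw⟩ := hg
  refine ⟨fun c x => ?_, fun x => ?_⟩
  · simpa using AddAut.map_smul_add (AddAut.map_smul_add hγ (β := RingEquiv.refl K) hn.1)
      (AddAut.map_smul_neg hγ) c x
  · change rankWeight F (g (n ((-g) x))) = rankWeight F x
    rw [hgw, hn.2, AddAut.invariant_neg hgw]

theorem IsGaloisRMMap.eq_zero [NeZero l] {f : AddAut (Fin l → K)} (hf : IsGaloisRMMap f)
    (hlin : ∀ (c : K) (x : Fin l → K), f (c • x) = c • f x) : f = 0 := by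
  obtain ⟨γ, hγ⟩ := hf
  have hγ_id (c : K) : γ c = c := by
    simpa [hγ] using congrFun (hlin c 1) 0
  ext x i
  rw [hγ, hγ_id]
  rfl

theorem IsSemilinearRMEquiv.exists_isLinearRMEquiv_add_isGaloisRMMap [Fintype F]
    {f : AddAut (Fin l → K)} (hf : IsSemilinearRMEquiv F f) :
    ∃ a b : AddAut (Fin l → K), IsLinearRMEquiv F a ∧ IsGaloisRMMap b ∧ f = a + b := by
  obtain ⟨⟨γ, hγ⟩, hfw⟩ := hf
  let b : AddAut (Fin l → K) := (RingEquiv.piCongrRight fun _ => γ).toAddEquiv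
  have hb (c : K) (x : Fin l → K) : b (c • x) = γ c • b x :=
    map_mul (RingEquiv.piCongrRight fun _ => γ) _ x
  refine ⟨f + -b, b, ⟨fun c x => ?_, fun x => ?_⟩, ⟨γ, fun _ _ => rfl⟩,
    (neg_add_cancel_right f b).symm⟩
  · simpa using AddAut.map_smul_add hγ (AddAut.map_smul_neg hb) c x
  · change rankWeight F (f ((-b) x)) = rankWeight F x
    rw [hfw]
    exact rankWeight_ringEquiv_comp γ.symm x

end RankMetric

theorem slequiv_rank_metric_semidirect_general
    (F K : Type*) [Field F] [Fintype F] [Field K] [Algebra F K]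
    (l : ℕ) (hl : 1 ≤ l) :
    (∀ g n : AddAut (Fin l → K), IsSemilinearRMEquiv F g → IsLinearRMEquiv F n →
        IsLinearRMEquiv F (g + n + -g)) ∧
    (∀ f : AddAut (Fin l → K), IsLinearRMEquiv F f → IsGaloisRMMap f → f = 0) ∧
    (∀ f : AddAut (Fin l → K), IsSemilinearRMEquiv F f →
        ∃ a b : AddAut (Fin l → K), IsLinearRMEquiv F a ∧ IsGaloisRMMap b ∧ f = a + b) := by
  have : NeZero l := ⟨by omega⟩
  exact ⟨fun _ _ hg hn => hn.conj hg, fun _ hf hgal => hgal.eq_zero hf.1,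
    fun _ hf => hf.exists_isLinearRMEquiv_add_isGaloisRMMap⟩

/-- **`SLEquiv` is the internal semidirect product `LEquiv ⋊ Gal(K/F_p)`.**
Within the group of semi-linear rank-metric-equivalence maps of `K^l`:
the linear ones form a normal subgroup, the coordinatewise Galois maps intersect it
trivially, and every semi-linear rank-metric-equivalence map factors as a linear one
followed by a Galois one. -/
theorem slequiv_rank_metric_semidirect
    (F K : Type*) [Field F] [Fintype F] [Field K] [Fintype K] [Algebra F K]
    (p : ℕ) [Fact p.Prime] [CharP F p] [CharP K p]
    (m l : ℕ) (hm : Module.finrank F K = m) (hl : 1 ≤ l) (hlm : l ≤ m) :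
    (∀ g n : AddAut (Fin l → K), IsSemilinearRMEquiv F g → IsLinearRMEquiv F n →
        IsLinearRMEquiv F (g + n + -g)) ∧
    (∀ f : AddAut (Fin l → K), IsLinearRMEquiv F f → IsGaloisRMMap f → f = 0) ∧
    (∀ f : AddAut (Fin l → K), IsSemilinearRMEquiv F f →
        ∃ a b : AddAut (Fin l → K), IsLinearRMEquiv F a ∧ IsGaloisRMMap b ∧ f = a + b) :=
  slequiv_rank_metric_semidirect_general F K l hl
end

section
/- Let F_q be a finite field and l, m positive integers. Let f : F_q^{l×m} → F_q^{l×m} be an invertible F_q-linear map satisfying rank(f(A)) = rank(A) for every A ∈ F_q^{l×m}. Then there exist L ∈ GL_l(F_q) and M ∈ GL_m(F_q) such that either f(A) = L·A·M for all A ∈ F_q^{l×m}, or f(A) = L·A^T·M for all A ∈ F_q^{l×m}, where the latter case can only occur if l = m. -/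
/-!
Write `B u v = f (u vᵀ)`. Since `f` and `f⁻¹` preserve rank `≤ 1` and `x yᵀ + x' y'ᵀ` has rank
`≤ 1` only if `x ∥ x'` or `y ∥ y'`, every value of `B u` shares its column or its row with a fixed
nonzero value; as a vector space is not the union of two proper subspaces, for `u ≠ 0` all values
of `B u` share one column or all share one row. Two independent `u₁`, `u₂` of different kinds
would give a value of `B (u₁ + u₂)` of rank two, so either all `B u` have a fixed column or, after
transposing `f`, they all do. Then the rows of the matrices `B u v` depend only on `v` (otherwise
`f` would map some `u₁ v₂ᵀ + u₂ vᵀ` of rank two to a matrix of rank one), which gives injective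
linear maps `L`, `N` with `f (u vᵀ) = (L u) (N v)ᵀ`, that is `f A = P A Qᵀ` for the matrices `P`,
`Q` of `L`, `N`. In the transposed case `L : F^l → F^m` and `N : F^m → F^l` force `l = m`.
-/

open Matrix Module

theorem LinearIndependent.pair_map {K V W : Type*} [Field K] [AddCommGroup V] [Module K V]
    [AddCommGroup W] [Module K W] {v w : V} (h : LinearIndependent K ![v, w])
    {N : V →ₗ[K] W} (hN : Function.Injective N) : LinearIndependent K ![N v, N w] :=
  LinearIndependent.pair_iff.mpr fun s t hst =>
    LinearIndependent.pair_iff.mp h s t (hN (by simpa using hst))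

theorem Module.one_lt_finrank_fun {K n : Type*} [Field K] [Fintype n] [Nontrivial n] :
    1 < finrank K (n → K) := by
  rw [finrank_fintype_fun_eq_card]
  exact Fintype.one_lt_card

namespace LinearMap

variable {K V W P : Type*} [Field K] [AddCommGroup V] [Module K V] [AddCommGroup W] [Module K W]
  [AddCommGroup P] [Module K P]

theorem forall_mem_or_forall_mem {φ ψ : V →ₗ[K] W} {S T : Submodule K W}
    (h : ∀ v, φ v ∈ S ∨ ψ v ∈ T) : (∀ v, φ v ∈ S) ∨ (∀ v, ψ v ∈ T) := by
  have := (AddSubgroupClass.subset_union (H := (⊤ : Submodule K V)) (K := S.comap φ)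
    (L := T.comap ψ)).mp fun v _ => h v
  simpa [eq_top_iff, SetLike.le_def] using this

theorem exists_comp_eq_of_forall_mem_range {T : P →ₗ[K] W} (hT : Function.Injective T)
    {φ : V →ₗ[K] W} (h : ∀ v, φ v ∈ range T) : ∃ L : V →ₗ[K] P, ∀ v, T (L v) = φ v :=
  ⟨(LinearEquiv.ofInjective T hT).symm.toLinearMap ∘ₗ φ.codRestrict _ h, fun v => by simp⟩

end LinearMap

namespace Matrix

variable {K : Type*} [Field K] {m n p q : Type*}

theorem vecMulVec_zero_right (x : m → K) : vecMulVec x (0 : n → K) = 0 :=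
  ext fun _ _ => mul_zero _

theorem vecMulVec_eq_zero_iff {x : m → K} {y : n → K} : vecMulVec x y = 0 ↔ x = 0 ∨ y = 0 := by
  simp only [← ext_iff, vecMulVec_apply, zero_apply, mul_eq_zero, funext_iff, Pi.zero_apply,
    forall_or_left, forall_or_right]

theorem vecMulVecBilin_injective {x : m → K} (hx : x ≠ 0) :
    Function.Injective (vecMulVecBilin K K x : (n → K) →ₗ[K] Matrix m n K) :=
  (injective_iff_map_eq_zero _).mpr fun y hy => by
    simpa [hx] using vecMulVec_eq_zero_iff.mp hy

theorem vecMulVecBilin_flip_injective {y : n → K} (hy : y ≠ 0) :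
    Function.Injective ((vecMulVecBilin K K).flip y : (m → K) →ₗ[K] Matrix m n K) :=
  (injective_iff_map_eq_zero _).mpr fun x hx => by
    simpa [hy] using vecMulVec_eq_zero_iff.mp hx

theorem vecMulVec_add_vecMulVec_eq_zero {x₁ x₂ : m → K} {y₁ y₂ : n → K}
    (hx : LinearIndependent K ![x₁, x₂]) (h : vecMulVec x₁ y₁ + vecMulVec x₂ y₂ = 0) :
    y₁ = 0 ∧ y₂ = 0 := by
  have hj : ∀ j, y₁ j = 0 ∧ y₂ j = 0 := fun j =>
    LinearIndependent.pair_iff.mp hx _ _ (funext fun i => by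
      simpa [vecMulVec_apply, mul_comm] using congr_fun₂ h i j)
  exact ⟨funext fun j => (hj j).1, funext fun j => (hj j).2⟩

theorem vecMulVec_add_vecMulVec_eq_zero' {x₁ x₂ : m → K} {y₁ y₂ : n → K}
    (hy : LinearIndependent K ![y₁, y₂]) (h : vecMulVec x₁ y₁ + vecMulVec x₂ y₂ = 0) :
    x₁ = 0 ∧ x₂ = 0 :=
  vecMulVec_add_vecMulVec_eq_zero hy <| by
    simpa only [transpose_add, transpose_vecMulVec, transpose_zero] using congr_arg transpose h

theorem rank_le_one_iff [Fintype n] {A : Matrix m n K} :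
    A.rank ≤ 1 ↔ ∃ x y, vecMulVec x y = A := by
  classical
  refine ⟨fun h => ?_, fun ⟨x, y, hA⟩ => hA ▸ rank_vecMulVec_le x y⟩
  obtain ⟨x, hx⟩ := finrank_le_one_iff.mp h
  choose c hc using fun j => hx ⟨_, LinearMap.mem_range_self A.mulVecLin (Pi.single j 1)⟩
  refine ⟨x, c, ext fun i j => ?_⟩
  have := congr_arg (fun w : LinearMap.range A.mulVecLin => (w : m → K) i) (hc j)
  simpa [mulVec_single, vecMulVec_apply, mul_comm] using this

theorem exists_mul_sub_mul_ne_zero {x₁ x₂ : m → K} (h : LinearIndependent K ![x₁, x₂]) :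
    ∃ i i', x₁ i * x₂ i' - x₁ i' * x₂ i ≠ 0 := by
  by_contra! hc
  obtain ⟨i, hi⟩ : ∃ i, x₁ i ≠ 0 := Function.ne_iff.mp (h.ne_zero 0)
  refine (LinearIndependent.pair_iff' (h.ne_zero 0)).mp h (x₂ i / x₁ i) (funext fun i' => ?_)
  simp only [Matrix.cons_val_zero, Pi.smul_apply, smul_eq_mul]
  field_simp
  linear_combination hc i' i

theorem one_lt_rank_vecMulVec_add_vecMulVec [Fintype n] {x₁ x₂ : m → K} {y₁ y₂ : n → K}
    (hx : LinearIndependent K ![x₁, x₂]) (hy : LinearIndependent K ![y₁, y₂]) :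
    1 < (vecMulVec x₁ y₁ + vecMulVec x₂ y₂).rank := by
  obtain ⟨i, i', hi⟩ := exists_mul_sub_mul_ne_zero hx
  obtain ⟨j, j', hj⟩ := exists_mul_sub_mul_ne_zero hy
  rw [← not_le, rank_le_one_iff]
  rintro ⟨x, y, h⟩
  have hminor := congr_arg (fun B : Matrix m n K => B i j * B i' j' - B i j' * B i' j) h
  simp only [add_apply, vecMulVec_apply] at hminor
  -- the minor of `x yᵀ` vanishes, that of `x₁ y₁ᵀ + x₂ y₂ᵀ` is the product of `hi` and `hj`
  exact mul_ne_zero hi hj (by linear_combination -hminor)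

theorem not_linearIndependent_or_of_rank_le_one [Fintype n] {x₁ x₂ : m → K} {y₁ y₂ : n → K}
    (h : (vecMulVec x₁ y₁ + vecMulVec x₂ y₂).rank ≤ 1) :
    ¬ LinearIndependent K ![x₁, x₂] ∨ ¬ LinearIndependent K ![y₁, y₂] := by
  by_contra! hli
  exact (one_lt_rank_vecMulVec_add_vecMulVec hli.1 hli.2).not_ge h

variable (n) in
def fixedCol (x : m → K) : Submodule K (Matrix m n K) :=
  LinearMap.range (vecMulVecBilin K K x)

variable (m) in
def fixedRow (y : n → K) : Submodule K (Matrix m n K) :=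
  LinearMap.range ((vecMulVecBilin K K).flip y)

theorem mem_fixedCol {x : m → K} {A : Matrix m n K} :
    A ∈ fixedCol n x ↔ ∃ y, vecMulVec x y = A :=
  Iff.rfl

theorem mem_fixedRow {y : n → K} {A : Matrix m n K} :
    A ∈ fixedRow m y ↔ ∃ x, vecMulVec x y = A :=
  Iff.rfl

theorem transpose_mem_fixedCol {y : n → K} {A : Matrix m n K} :
    Aᵀ ∈ fixedCol m y ↔ A ∈ fixedRow m y := by
  simp only [mem_fixedCol, mem_fixedRow]
  refine exists_congr fun x => ⟨fun h => ?_, fun h => ?_⟩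
  · rw [← transpose_transpose A, ← h, transpose_vecMulVec]
  · rw [← h, transpose_vecMulVec]

theorem rank_le_one_of_mem_fixedCol [Fintype n] {x : m → K} {A : Matrix m n K}
    (hA : A ∈ fixedCol n x) : A.rank ≤ 1 :=
  rank_le_one_iff.mpr ⟨x, mem_fixedCol.mp hA⟩

theorem vecMulVec_mem_fixedCol {x x' : m → K} (hx : x ≠ 0)
    (h : ¬ LinearIndependent K ![x, x']) (y : n → K) : vecMulVec x' y ∈ fixedCol n x := by
  obtain ⟨a, rfl⟩ : ∃ a : K, a • x = x' := by
    simpa [LinearIndependent.pair_iff' hx] using h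
  exact mem_fixedCol.mpr ⟨a • y, by rw [smul_vecMulVec, vecMulVec_smul]⟩

theorem vecMulVec_mem_fixedRow {y y' : n → K} (hy : y ≠ 0)
    (h : ¬ LinearIndependent K ![y, y']) (x : m → K) : vecMulVec x y' ∈ fixedRow m y := by
  rw [← transpose_mem_fixedCol, transpose_vecMulVec]
  exact vecMulVec_mem_fixedCol hy h x

theorem fixedCol_le_of_mem {x x' : m → K} {A : Matrix m n K} (hA : A ∈ fixedCol n x)
    (hA' : A ∈ fixedCol n x') (hA₀ : A ≠ 0) : fixedCol n x' ≤ fixedCol n x := by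
  obtain ⟨a, rfl⟩ := mem_fixedCol.mp hA
  obtain ⟨a', ha'⟩ := mem_fixedCol.mp hA'
  have hx : x ≠ 0 := by rintro rfl; simp at hA₀
  have hdep : ¬ LinearIndependent K ![x, x'] := fun hli => hA₀ <| by
    have := vecMulVec_add_vecMulVec_eq_zero hli (y₁ := a) (y₂ := -a')
      (by rw [vecMulVec_neg, ha', add_neg_cancel])
    rw [this.1, vecMulVec_zero_right]
  intro B hB
  obtain ⟨y, rfl⟩ := mem_fixedCol.mp hB
  exact vecMulVec_mem_fixedCol hx hdep y

theorem fixedRow_le_of_mem {y y' : n → K} {A : Matrix m n K} (hA : A ∈ fixedRow m y)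
    (hA' : A ∈ fixedRow m y') (hA₀ : A ≠ 0) : fixedRow m y' ≤ fixedRow m y := fun B hB => by
  rw [← transpose_mem_fixedCol] at hA hA' hB ⊢
  exact fixedCol_le_of_mem hA hA' (by simpa using hA₀) hB

theorem fixedCol_inf_fixedRow_le_span (x : m → K) (y : n → K) :
    fixedCol n x ⊓ fixedRow m y ≤ K ∙ vecMulVec x y := by
  rintro A ⟨hAx, hAy⟩
  obtain ⟨a, rfl⟩ := mem_fixedCol.mp hAx
  obtain ⟨b, hb⟩ := mem_fixedRow.mp hAy
  rcases eq_or_ne y 0 with rfl | hy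
  · simp [← hb, vecMulVec_zero_right]
  obtain ⟨j, hj⟩ : ∃ j, y j ≠ 0 := Function.ne_iff.mp hy
  refine Submodule.mem_span_singleton.mpr ⟨a j / y j, ?_⟩
  have hcol : ∀ i, b i * y j = x i * a j := fun i => by
    simpa [vecMulVec_apply] using congr_fun₂ hb i j
  rw [← hb]
  ext i j'
  simp only [smul_apply, vecMulVec_apply, smul_eq_mul]
  field_simp
  linear_combination -y j' * hcol i

section Pencil

variable {U V : Type*} [AddCommGroup U] [Module K U] [AddCommGroup V] [Module K V]

def HasFixedCol (φ : V →ₗ[K] Matrix p q K) : Prop :=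
  ∃ x ≠ 0, ∀ v, φ v ∈ fixedCol q x

def HasFixedRow (φ : V →ₗ[K] Matrix p q K) : Prop :=
  ∃ y ≠ 0, ∀ v, φ v ∈ fixedRow p y

theorem hasFixedRow_iff_hasFixedCol_transpose {φ : V →ₗ[K] Matrix p q K} :
    HasFixedRow φ ↔ HasFixedCol ((transposeLinearEquiv p q K K).toLinearMap ∘ₗ φ) := by
  simp [HasFixedRow, HasFixedCol, transpose_mem_fixedCol]

theorem forall_mem_fixedCol_or_forall_mem_fixedRow [Fintype q] {φ : V →ₗ[K] Matrix p q K}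
    (hφ : ∀ v, (φ v).rank ≤ 1) {v₁ : V} {x₁ : p → K} {y₁ : q → K}
    (h₁ : vecMulVec x₁ y₁ = φ v₁) (hx₁ : x₁ ≠ 0) (hy₁ : y₁ ≠ 0) :
    (∀ v, φ v ∈ fixedCol q x₁) ∨ (∀ v, φ v ∈ fixedRow p y₁) := by
  refine LinearMap.forall_mem_or_forall_mem fun v => ?_
  obtain ⟨x, y, hv⟩ := rank_le_one_iff.mp (hφ v)
  have hsum := hφ (v₁ + v)
  rw [map_add, ← h₁, ← hv] at hsum
  rw [← hv]
  exact (not_linearIndependent_or_of_rank_le_one hsum).imp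
    (fun hx => vecMulVec_mem_fixedCol hx₁ hx y) (fun hy => vecMulVec_mem_fixedRow hy₁ hy x)

theorem hasFixedCol_or_hasFixedRow [Fintype q] [Nontrivial V] {φ : V →ₗ[K] Matrix p q K}
    (hφ : Function.Injective φ) (hφ₁ : ∀ v, (φ v).rank ≤ 1) :
    HasFixedCol φ ∨ HasFixedRow φ := by
  obtain ⟨v₁, hv₁⟩ := exists_ne (0 : V)
  obtain ⟨x₁, y₁, h₁⟩ := rank_le_one_iff.mp (hφ₁ v₁)
  have hxy : vecMulVec x₁ y₁ ≠ 0 := h₁ ▸ (map_ne_zero_iff φ hφ).mpr hv₁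
  rw [Ne, vecMulVec_eq_zero_iff, not_or] at hxy
  exact (forall_mem_fixedCol_or_forall_mem_fixedRow hφ₁ h₁ hxy.1 hxy.2).imp
    (fun h => ⟨x₁, hxy.1, h⟩) (fun h => ⟨y₁, hxy.2, h⟩)

theorem not_forall_mem_fixedCol_and_fixedRow {φ : V →ₗ[K] Matrix p q K}
    (hφ : Function.Injective φ) (hV : 1 < finrank K V) (x : p → K) (y : q → K) :
    ¬ ((∀ v, φ v ∈ fixedCol q x) ∧ (∀ v, φ v ∈ fixedRow p y)) := by
  rintro ⟨hx, hy⟩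
  have hle : LinearMap.range φ ≤ K ∙ vecMulVec x y := by
    rintro _ ⟨v, rfl⟩
    exact fixedCol_inf_fixedRow_le_span x y ⟨hx v, hy v⟩
  have := (Submodule.finrank_mono hle).trans (by simpa using finrank_span_le_card {vecMulVec x y})
  rw [LinearMap.finrank_range_of_inj hφ] at this
  omega

theorem not_hasFixedCol_and_hasFixedRow_of_add [Fintype q] {φ ψ : V →ₗ[K] Matrix p q K}
    (hφ : Function.Injective φ) (hψ : Function.Injective ψ) (hV : 1 < finrank K V)
    (hsum : ∀ v, (φ v + ψ v).rank ≤ 1) : ¬ (HasFixedCol φ ∧ HasFixedRow ψ) := by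
  rintro ⟨⟨x, hx, hφx⟩, ⟨y, hy, hψy⟩⟩
  have key : ∀ v, ψ v ∈ fixedCol q x ∨ φ v ∈ fixedRow p y := fun v => by
    obtain ⟨a, ha⟩ := mem_fixedCol.mp (hφx v)
    obtain ⟨b, hb⟩ := mem_fixedRow.mp (hψy v)
    have h := hsum v
    rw [← ha, ← hb] at h ⊢
    exact (not_linearIndependent_or_of_rank_le_one h).imp
      (fun h => vecMulVec_mem_fixedCol hx h y)
      (fun h => vecMulVec_mem_fixedRow hy (LinearIndependent.pair_symm_iff.not.mp h) x)
  rcases LinearMap.forall_mem_or_forall_mem key with h | h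
  · exact not_forall_mem_fixedCol_and_fixedRow hψ hV x y ⟨h, hψy⟩
  · exact not_forall_mem_fixedCol_and_fixedRow hφ hV x y ⟨hφx, h⟩

theorem hasFixedCol_of_hasFixedCol [Fintype q] {B : U →ₗ[K] V →ₗ[K] Matrix p q K}
    (hB : ∀ u v, (B u v).rank ≤ 1) (hinj : ∀ u ≠ 0, Function.Injective (B u))
    (hV : 1 < finrank K V) {u₀ u : U} (hu₀ : u₀ ≠ 0) (hu : u ≠ 0) (h₀ : HasFixedCol (B u₀)) :
    HasFixedCol (B u) := by
  have : Nontrivial V := Module.nontrivial_of_finrank_pos (R := K) (by omega)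
  by_cases hli : LinearIndependent K ![u₀, u]
  · refine (hasFixedCol_or_hasFixedRow (hinj u hu) (hB u)).resolve_right fun h => ?_
    refine not_hasFixedCol_and_hasFixedRow_of_add (hinj u₀ hu₀) (hinj u hu) hV
      (fun v => ?_) ⟨h₀, h⟩
    simpa using hB (u₀ + u) v
  · obtain ⟨a, rfl⟩ : ∃ a : K, a • u₀ = u := by
      simpa [LinearIndependent.pair_iff' hu₀] using hli
    obtain ⟨x, hx, hxv⟩ := h₀
    exact ⟨x, hx, fun v => by simpa using Submodule.smul_mem _ a (hxv v)⟩

theorem forall_hasFixedCol_or_forall_hasFixedRow [Fintype p] [Fintype q] [Nontrivial U]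
    {B : U →ₗ[K] V →ₗ[K] Matrix p q K} (hB : ∀ u v, (B u v).rank ≤ 1)
    (hinj : ∀ u ≠ 0, Function.Injective (B u)) (hV : 1 < finrank K V) :
    (∀ u ≠ 0, HasFixedCol (B u)) ∨ (∀ u ≠ 0, HasFixedRow (B u)) := by
  have : Nontrivial V := Module.nontrivial_of_finrank_pos (R := K) (by omega)
  obtain ⟨u₀, hu₀⟩ := exists_ne (0 : U)
  let Bt := B.compr₂ (transposeLinearEquiv p q K K).toLinearMap
  refine (hasFixedCol_or_hasFixedRow (hinj u₀ hu₀) (hB u₀)).imp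
    (fun h u hu => hasFixedCol_of_hasFixedCol hB hinj hV hu₀ hu h)
    (fun h u hu => hasFixedRow_iff_hasFixedCol_transpose.mpr ?_)
  refine hasFixedCol_of_hasFixedCol (B := Bt) (fun u v => ?_) (fun u hu => ?_) hV hu₀ hu
    (hasFixedRow_iff_hasFixedCol_transpose.mp h)
  · simpa [Bt] using hB u v
  · exact (transposeLinearEquiv p q K K).injective.comp (hinj u hu)

theorem exists_linearMap_of_forall_mem_fixedRow [Nontrivial V]
    {B : U →ₗ[K] V →ₗ[K] Matrix p q K} {N : V →ₗ[K] (q → K)} (hN : Function.Injective N)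
    (h : ∀ u v, B u v ∈ fixedRow p (N v)) :
    ∃ L : U →ₗ[K] (p → K), ∀ u v, B u v = vecMulVec (L u) (N v) := by
  obtain ⟨v₀, hv₀⟩ := exists_ne (0 : V)
  obtain ⟨L, hL⟩ := LinearMap.exists_comp_eq_of_forall_mem_range
    (vecMulVecBilin_flip_injective ((map_ne_zero_iff N hN).mpr hv₀)) (φ := B.flip v₀)
    (fun u => h u v₀)
  simp only [LinearMap.flip_apply, vecMulVecBilin_apply_apply] at hL
  refine ⟨L, fun u v => ?_⟩
  by_cases hli : LinearIndependent K ![v₀, v]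
  · obtain ⟨x, hx⟩ := mem_fixedRow.mp (h u v)
    obtain ⟨x', hx'⟩ := mem_fixedRow.mp (h u (v₀ + v))
    have hzero : vecMulVec (x' - L u) (N v₀) + vecMulVec (x' - x) (N v) = 0 := by
      rw [map_add, vecMulVec_add, map_add] at hx'
      rw [sub_vecMulVec, sub_vecMulVec, hL, hx, sub_add_sub_comm, hx', sub_self]
    obtain ⟨h₀, h₁⟩ := vecMulVec_add_vecMulVec_eq_zero' (hli.pair_map hN) hzero
    rw [← hx, ← sub_eq_zero.mp h₁, sub_eq_zero.mp h₀]
  · obtain ⟨a, rfl⟩ : ∃ a : K, a • v₀ = v := by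
      simpa [LinearIndependent.pair_iff' hv₀] using hli
    rw [map_smul, map_smul, ← hL, vecMulVec_smul]

end Pencil

section Preserver

variable [Fintype m] [Fintype n] [Fintype q]

theorem hasFixedRow_flip [Nontrivial m] [Nontrivial n] {f : Matrix m n K ≃ₗ[K] Matrix p q K}
    (hf : ∀ A, (f A).rank ≤ 1 ↔ A.rank ≤ 1)
    (hcol : ∀ u ≠ 0, HasFixedCol ((vecMulVecBilin K K).compr₂ f.toLinearMap u))
    {v : n → K} (hv : v ≠ 0) :
    HasFixedRow (((vecMulVecBilin K K).compr₂ f.toLinearMap).flip v) := by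
  have hinj : Function.Injective (((vecMulVecBilin K K).compr₂ f.toLinearMap).flip v) := by
    refine (injective_iff_map_eq_zero _).mpr fun u hu => ?_
    simpa [hv, vecMulVec_eq_zero_iff] using hu
  refine (hasFixedCol_or_hasFixedRow hinj fun u => ?_).resolve_left ?_
  · simpa using (hf _).mpr (rank_vecMulVec_le u v)
  rintro ⟨x, -, hx⟩
  obtain ⟨u₁, hu₁⟩ := exists_ne (0 : m → K)
  obtain ⟨u₂, hu⟩ := exists_linearIndependent_pair_of_one_lt_finrank
    (one_lt_finrank_fun (K := K) (n := m)) hu₁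
  obtain ⟨v₂, hv'⟩ := exists_linearIndependent_pair_of_one_lt_finrank
    (one_lt_finrank_fun (K := K) (n := n)) hv
  obtain ⟨x₁, -, hx₁⟩ := hcol u₁ hu₁
  simp only [LinearMap.flip_apply, LinearMap.compr₂_apply, vecMulVecBilin_apply_apply,
    LinearEquiv.coe_coe] at hx hx₁
  -- `f (u₁ v₂ᵀ + u₂ vᵀ)` would have rank one although `u₁ v₂ᵀ + u₂ vᵀ` has rank two
  have hne : f (vecMulVec u₁ v) ≠ 0 := by simp [vecMulVec_eq_zero_iff, hu₁, hv]
  have h₁ : f (vecMulVec u₁ v₂) ∈ fixedCol q x :=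
    fixedCol_le_of_mem (hx u₁) (hx₁ v) hne (hx₁ v₂)
  have hsum : (f (vecMulVec u₁ v₂ + vecMulVec u₂ v)).rank ≤ 1 := by
    rw [map_add]
    exact rank_le_one_of_mem_fixedCol (add_mem h₁ (hx u₂))
  exact (one_lt_rank_vecMulVec_add_vecMulVec hu
    (LinearIndependent.pair_symm_iff.mp hv')).not_ge ((hf _).mp hsum)

theorem exists_linearMap_of_hasFixedCol [Nontrivial m] [Nontrivial n]
    {f : Matrix m n K ≃ₗ[K] Matrix p q K} (hf : ∀ A, (f A).rank ≤ 1 ↔ A.rank ≤ 1)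
    (hcol : ∀ u ≠ 0, HasFixedCol ((vecMulVecBilin K K).compr₂ f.toLinearMap u)) :
    ∃ (L : (m → K) →ₗ[K] (p → K)) (N : (n → K) →ₗ[K] (q → K)),
      ∀ u v, f (vecMulVec u v) = vecMulVec (L u) (N v) := by
  obtain ⟨u₀, hu₀⟩ := exists_ne (0 : m → K)
  obtain ⟨x₀, hx₀, h₀⟩ := hcol u₀ hu₀
  obtain ⟨N, hN⟩ := LinearMap.exists_comp_eq_of_forall_mem_range (vecMulVecBilin_injective hx₀) h₀
  simp only [LinearMap.compr₂_apply, vecMulVecBilin_apply_apply, LinearEquiv.coe_coe] at hN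
  have hNinj : Function.Injective N := fun v v' hvv' =>
    f.injective.comp (vecMulVecBilin_injective hu₀) (by simp [← hN, hvv'])
  have hrow : ∀ u v, (vecMulVecBilin K K).compr₂ f.toLinearMap u v ∈ fixedRow p (N v) := by
    intro u v
    rcases eq_or_ne v 0 with rfl | hv
    · simp [vecMulVec_zero_right]
    obtain ⟨y, -, hy⟩ := hasFixedRow_flip hf hcol hv
    simp only [LinearMap.flip_apply] at hy
    have hne : f (vecMulVec u₀ v) ≠ 0 := by simp [vecMulVec_eq_zero_iff, hu₀, hv]
    exact fixedRow_le_of_mem (mem_fixedRow.mpr ⟨x₀, hN v⟩) (hy u₀) hne (hy u)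
  obtain ⟨L, hL⟩ := exists_linearMap_of_forall_mem_fixedRow hNinj hrow
  exact ⟨L, N, fun u v => by simpa using hL u v⟩

theorem exists_map_vecMulVec_eq_of_nontrivial [Fintype p] [Nontrivial m] [Nontrivial n]
    (f : Matrix m n K ≃ₗ[K] Matrix p q K) (hf : ∀ A, (f A).rank ≤ 1 ↔ A.rank ≤ 1) :
    (∃ (L : (m → K) →ₗ[K] (p → K)) (N : (n → K) →ₗ[K] (q → K)),
      ∀ u v, f (vecMulVec u v) = vecMulVec (L u) (N v)) ∨
    (∃ (L : (m → K) →ₗ[K] (q → K)) (N : (n → K) →ₗ[K] (p → K)),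
      ∀ u v, f (vecMulVec u v) = vecMulVec (N v) (L u)) := by
  have hinj : ∀ u ≠ 0, Function.Injective ((vecMulVecBilin K K).compr₂ f.toLinearMap u) :=
    fun u hu => (injective_iff_map_eq_zero _).mpr fun v hv => by
      simpa [hu, vecMulVec_eq_zero_iff] using hv
  refine (forall_hasFixedCol_or_forall_hasFixedRow (fun u v => ?_) hinj one_lt_finrank_fun).imp
    (exists_linearMap_of_hasFixedCol hf) fun hrow => ?_
  · simpa using (hf _).mpr (rank_vecMulVec_le u v)
  obtain ⟨L, N, h⟩ := exists_linearMap_of_hasFixedCol (f := f.trans (transposeLinearEquiv p q K K))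
    (by simpa using hf) fun u hu => hasFixedRow_iff_hasFixedCol_transpose.mp (hrow u hu)
  exact ⟨L, N, fun u v => by simpa using congr_arg transpose (h u v)⟩

end Preserver

theorem exists_map_vecMulVec_eq_of_unique_right [Unique n]
    (f : Matrix m n K →ₗ[K] Matrix p n K) :
    ∃ L : (m → K) →ₗ[K] (p → K), ∀ u v, f (vecMulVec u v) = vecMulVec (L u) v := by
  refine ⟨LinearMap.proj default ∘ₗ (transposeLinearEquiv p n K K).toLinearMap ∘ₗ f ∘ₗ
    (vecMulVecBilin K K).flip 1, fun u v => ?_⟩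
  have hv : v = v default • 1 := funext fun j => by simp [Unique.eq_default j]
  conv_lhs => rw [hv, vecMulVec_smul, map_smul]
  ext i j
  rw [Unique.eq_default j, smul_apply, vecMulVec_apply, smul_eq_mul]
  exact mul_comm _ _

theorem exists_map_vecMulVec_eq_of_unique_left [Unique m]
    (f : Matrix m n K →ₗ[K] Matrix m q K) :
    ∃ N : (n → K) →ₗ[K] (q → K), ∀ u v, f (vecMulVec u v) = vecMulVec u (N v) := by
  obtain ⟨N, hN⟩ := exists_map_vecMulVec_eq_of_unique_right
    ((transposeLinearEquiv m q K K).toLinearMap ∘ₗ f ∘ₗ (transposeLinearEquiv n m K K).toLinearMap)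
  exact ⟨N, fun u v => by simpa using congr_arg transpose (hN v u)⟩

theorem exists_map_vecMulVec_eq [Fintype m] [Fintype n] [Nonempty m] [Nonempty n]
    (f : Matrix m n K ≃ₗ[K] Matrix m n K) (hf : ∀ A, (f A).rank ≤ 1 ↔ A.rank ≤ 1) :
    (∃ (L : (m → K) →ₗ[K] (m → K)) (N : (n → K) →ₗ[K] (n → K)),
      ∀ u v, f (vecMulVec u v) = vecMulVec (L u) (N v)) ∨
    (∃ (L : (m → K) →ₗ[K] (n → K)) (N : (n → K) →ₗ[K] (m → K)),
      ∀ u v, f (vecMulVec u v) = vecMulVec (N v) (L u)) := by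
  rcases subsingleton_or_nontrivial n with hn | hn
  · obtain ⟨_⟩ := nonempty_unique n
    obtain ⟨L, hL⟩ := exists_map_vecMulVec_eq_of_unique_right f.toLinearMap
    exact Or.inl ⟨L, LinearMap.id, hL⟩
  rcases subsingleton_or_nontrivial m with hm | hm
  · obtain ⟨_⟩ := nonempty_unique m
    obtain ⟨N, hN⟩ := exists_map_vecMulVec_eq_of_unique_left f.toLinearMap
    exact Or.inl ⟨LinearMap.id, N, hN⟩
  exact exists_map_vecMulVec_eq_of_nontrivial f hf

theorem injective_of_map_vecMulVec [Nonempty m] [Nonempty n]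
    {f : Matrix m n K →ₗ[K] Matrix p q K} (hf : Function.Injective f)
    {L : (m → K) →ₗ[K] (p → K)} {N : (n → K) →ₗ[K] (q → K)}
    (h : ∀ u v, f (vecMulVec u v) = vecMulVec (L u) (N v)) :
    Function.Injective L ∧ Function.Injective N := by
  refine ⟨(injective_iff_map_eq_zero L).mpr fun u hu => ?_,
    (injective_iff_map_eq_zero N).mpr fun v hv => ?_⟩
  · have h₁ := h u 1
    rw [hu, zero_vecMulVec, ← map_zero f] at h₁
    simpa [vecMulVec_eq_zero_iff] using hf h₁
  · have h₁ := h 1 v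
    rw [hv, vecMulVec_zero_right, ← map_zero f] at h₁
    simpa [vecMulVec_eq_zero_iff] using hf h₁

theorem map_eq_toMatrix'_mul_mul [Fintype m] [Fintype n] [DecidableEq m] [DecidableEq n]
    (f : Matrix m n K →ₗ[K] Matrix p q K) (L : (m → K) →ₗ[K] (p → K))
    (N : (n → K) →ₗ[K] (q → K)) (h : ∀ u v, f (vecMulVec u v) = vecMulVec (L u) (N v))
    (A : Matrix m n K) : f A = L.toMatrix' * A * (N.toMatrix')ᵀ := by
  induction A using Matrix.induction_on' with
  | h_zero => simp
  | h_add A B hA hB => rw [map_add, hA, hB, Matrix.mul_add, Matrix.add_mul]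
  | h_std_basis i j c =>
    have hc : single i j c = vecMulVec (c • Pi.single i 1) (Pi.single j 1) := by
      rw [smul_vecMulVec, ← single_eq_single_vecMulVec_single, smul_single, smul_eq_mul, mul_one]
    rw [hc, h, mul_vecMulVec, vecMulVec_mul, vecMul_transpose, LinearMap.toMatrix'_mulVec,
      LinearMap.toMatrix'_mulVec]

theorem exists_GL_of_map_vecMulVec [Fintype m] [Fintype n] [DecidableEq m] [DecidableEq n]
    (f : Matrix m n K →ₗ[K] Matrix m n K) {L : (m → K) →ₗ[K] (m → K)}
    {N : (n → K) →ₗ[K] (n → K)} (hL : Function.Injective L) (hN : Function.Injective N)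
    (h : ∀ u v, f (vecMulVec u v) = vecMulVec (L u) (N v)) :
    ∃ (P : GL m K) (Q : GL n K), ∀ A, f A = (P : Matrix m m K) * A * (Q : Matrix n n K) := by
  have hP : IsUnit L.toMatrix' := mulVec_injective_iff_isUnit.mp <| by
    rwa [show L.toMatrix'.mulVec = L from funext L.toMatrix'_mulVec]
  have hQ : IsUnit N.toMatrix'ᵀ := (isUnit_transpose _).mpr <| mulVec_injective_iff_isUnit.mp <| by
    rwa [show N.toMatrix'.mulVec = N from funext N.toMatrix'_mulVec]
  exact ⟨hP.unit, hQ.unit, map_eq_toMatrix'_mul_mul f L N h⟩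

end Matrix

theorem rank_preserving_linear_map_characterization_general
    {F : Type*} [Field F] {l m : ℕ} (hl : 0 < l) (hm : 0 < m)
    (f : Matrix (Fin l) (Fin m) F ≃ₗ[F] Matrix (Fin l) (Fin m) F)
    (hf : ∀ A, (f A).rank = A.rank) :
    (∃ (L : GL (Fin l) F) (M : GL (Fin m) F),
        ∀ A, f A = (L : Matrix (Fin l) (Fin l) F) * A * (M : Matrix (Fin m) (Fin m) F)) ∨
    (∃ (h : l = m) (L : GL (Fin l) F) (M : GL (Fin m) F),
        ∀ A, f A = (L : Matrix (Fin l) (Fin l) F) *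
          (Matrix.submatrix Aᵀ (Fin.cast h) (Fin.cast h.symm)) * (M : Matrix (Fin m) (Fin m) F)) := by
  have : Nonempty (Fin l) := Fin.pos_iff_nonempty.mp hl
  have : Nonempty (Fin m) := Fin.pos_iff_nonempty.mp hm
  rcases exists_map_vecMulVec_eq f fun A => by rw [hf] with ⟨L, N, h⟩ | ⟨L, N, h⟩
  · obtain ⟨hL, hN⟩ := injective_of_map_vecMulVec f.injective h
    exact Or.inl (exists_GL_of_map_vecMulVec f.toLinearMap hL hN h)
  let g := (transposeLinearEquiv (Fin m) (Fin l) F F).trans f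
  have hg : ∀ v u, g (vecMulVec v u) = vecMulVec (N v) (L u) := fun v u => by simp [g, ← h]
  obtain ⟨hN, hL⟩ := injective_of_map_vecMulVec g.injective hg
  have hlm := LinearMap.finrank_le_finrank_of_injective hL
  have hml := LinearMap.finrank_le_finrank_of_injective hN
  simp only [Module.finrank_fin_fun] at hlm hml
  obtain rfl : l = m := le_antisymm hlm hml
  obtain ⟨P, Q, hPQ⟩ := exists_GL_of_map_vecMulVec g.toLinearMap hN hL hg
  exact Or.inr ⟨rfl, P, Q, fun A => by simpa [g] using hPQ Aᵀ⟩

/-- **Characterization of invertible linear rank-preserving maps on matrices.**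
Every invertible `F`-linear rank-preserving map `f` on `F^{l×m}` is of the form
`A ↦ L * A * M`, or (only possible when `l = m`) of the form `A ↦ L * Aᵀ * M`,
for some invertible matrices `L ∈ GL_l(F)` and `M ∈ GL_m(F)`. -/
theorem rank_preserving_linear_map_characterization
    {F : Type*} [Field F] [Fintype F] {l m : ℕ} (hl : 0 < l) (hm : 0 < m)
    (f : Matrix (Fin l) (Fin m) F ≃ₗ[F] Matrix (Fin l) (Fin m) F)
    (hf : ∀ A, (f A).rank = A.rank) :
    (∃ (L : GL (Fin l) F) (M : GL (Fin m) F),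
        ∀ A, f A = (L : Matrix (Fin l) (Fin l) F) * A * (M : Matrix (Fin m) (Fin m) F)) ∨
    (∃ (h : l = m) (L : GL (Fin l) F) (M : GL (Fin m) F),
        ∀ A, f A = (L : Matrix (Fin l) (Fin l) F) *
          (Matrix.submatrix Aᵀ (Fin.cast h) (Fin.cast h.symm)) * (M : Matrix (Fin m) (Fin m) F)) :=
  rank_preserving_linear_map_characterization_general hl hm f hf
end

section
/- Let F_q be a finite field of characteristic p, and l, m positive integers. Let SLEquivMat denote the group (under composition) of invertible semi-linear rank-preserving maps on F_q^{l×m}, let LEquivMat ≤ SLEquivMat be the subgroup of invertible F_q-linear rank-preserving maps, and let G ≤ SLEquivMat be the subgroup of entrywise Galois maps {A ↦ A^γ : γ ∈ Gal(F_q/F_p)} (γ applied to each entry). Then LEquivMat is normal in SLEquivMat, LEquivMat ∩ G is trivial, and SLEquivMat = LEquivMat·G; that is, SLEquivMat is the internal semidirect product LEquivMat ⋊ Gal(F_q/F_p). -/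
open Matrix

/-- `f` is a semi-linear matrix-equivalence map: an additive automorphism of `F^{l×m}`
which is semi-linear for some `γ ∈ Gal(F/F_p)` and preserves matrix rank. -/
def IsSemilinearMatEquiv {F : Type*} [Field F] {l m : ℕ}
    (f : AddAut (Matrix (Fin l) (Fin m) F)) : Prop :=
  (∃ γ : F ≃+* F, ∀ (c : F) (A : Matrix (Fin l) (Fin m) F), f (c • A) = γ c • f A) ∧
  ∀ A : Matrix (Fin l) (Fin m) F, (f A).rank = A.rank

/-- `f` is a linear matrix-equivalence map: an additive automorphism of `F^{l×m}`
which is `F`-linear and preserves matrix rank. -/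
def IsLinearMatEquiv {F : Type*} [Field F] {l m : ℕ}
    (f : AddAut (Matrix (Fin l) (Fin m) F)) : Prop :=
  (∀ (c : F) (A : Matrix (Fin l) (Fin m) F), f (c • A) = c • f A) ∧
  ∀ A : Matrix (Fin l) (Fin m) F, (f A).rank = A.rank

/-- `f` is the entrywise application of some `γ ∈ Gal(F/F_p)`. -/
def IsGaloisMatMap {F : Type*} [Field F] {l m : ℕ}
    (f : AddAut (Matrix (Fin l) (Fin m) F)) : Prop :=
  ∃ γ : F ≃+* F, ∀ A : Matrix (Fin l) (Fin m) F, f A = A.map γ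

/-!
The field automorphism twisting a semilinear automorphism is multiplicative: if `f` is
`γ`-semilinear and `g` is `δ`-semilinear then `f ∘ g` is `γδ`-semilinear and `f⁻¹` is
`γ⁻¹`-semilinear. So conjugating a linear map by a `γ`-semilinear one gives a linear map, and
a `γ`-semilinear `f` composed with the inverse of `A ↦ A^γ` is linear. The entrywise map
`A ↦ A^γ` preserves rank since it carries the column space of `A` onto that of `A^γ` by a
`γ`-semilinear bijection; it is linear only if `γ` fixes every entry, as one sees by applying
it to `c • Eᵢⱼ`.
-/

theorem Matrix.rank_map_ringEquiv {m n R S : Type*} [Fintype n] [CommSemiring R]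
    [CommSemiring S] (γ : R ≃+* S) (A : Matrix m n R) : (A.map γ).rank = A.rank := by
  have := RingHomInvPair.of_ringEquiv γ
  have := RingHomInvPair.of_ringEquiv_symm γ
  let e : (m → R) ≃ₛₗ[(γ : R →+* S)] (m → S) :=
    { AddEquiv.piCongrRight fun _ => γ.toAddEquiv with
      map_smul' := fun c v => by ext; simp }
  let V := Submodule.span R (Set.range A.col)
  have hspan : Submodule.span S (Set.range (A.map γ).col) = V.map e.toLinearMap := by
    rw [Submodule.map_span, ← Set.range_comp]
    rfl
  have hrank := lift_rank_eq_of_equiv_equiv γ (e.submoduleMap V).toAddEquiv γ.bijective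
    (e.submoduleMap V).map_smulₛₗ
  rw [rank_eq_finrank_span_cols, rank_eq_finrank_span_cols, hspan, Module.finrank,
    Module.finrank, ← Cardinal.toNat_lift, ← hrank, Cardinal.toNat_lift]

section Semilinear

variable {R M : Type*} [Semiring R] [AddCommMonoid M] [Module R M]

def IsSemilinearAut (γ : R ≃+* R) (f : AddAut M) : Prop :=
  ∀ (c : R) (x : M), f (c • x) = γ c • f x

variable {γ δ : R ≃+* R} {f g : AddAut M}

theorem IsSemilinearAut.add (hf : IsSemilinearAut γ f) (hg : IsSemilinearAut δ g) :
    IsSemilinearAut (δ.trans γ) (f + g) := fun c x => by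
  change f (g (c • x)) = γ (δ c) • f (g x)
  rw [hg, hf]

theorem IsSemilinearAut.neg (hf : IsSemilinearAut γ f) : IsSemilinearAut γ.symm (-f) :=
  fun c x => f.injective <| by
    change f (f.symm (c • x)) = f (γ.symm c • f.symm x)
    rw [hf, AddEquiv.apply_symm_apply, AddEquiv.apply_symm_apply, RingEquiv.apply_symm_apply]

theorem IsSemilinearAut.add_add_neg (hf : IsSemilinearAut γ f)
    (hg : IsSemilinearAut (RingEquiv.refl R) g) :
    IsSemilinearAut (RingEquiv.refl R) (f + g + -f) := fun c x =>
  ((hf.add hg).add hf.neg c x).trans (by simp)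

end Semilinear

section MatrixAut

variable {m n R : Type*}

section Semiring

variable [Semiring R]

def galoisMatAut (γ : R ≃+* R) : AddAut (Matrix m n R) :=
  AddEquiv.mapMatrix γ.toAddEquiv

@[simp]
theorem galoisMatAut_apply (γ : R ≃+* R) (A : Matrix m n R) : galoisMatAut γ A = A.map γ :=
  rfl

theorem isSemilinearAut_galoisMatAut (γ : R ≃+* R) :
    IsSemilinearAut γ (galoisMatAut γ : AddAut (Matrix m n R)) := fun c A => by
  ext i j
  simp

theorem galoisMatAut_eq_zero_of_isSemilinearAut_refl {γ : R ≃+* R}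
    (h : IsSemilinearAut (RingEquiv.refl R) (galoisMatAut γ : AddAut (Matrix m n R))) :
    (galoisMatAut γ : AddAut (Matrix m n R)) = 0 := by
  classical
  ext A i j
  simpa using congr_fun₂ (h (A i j) (single i j 1)) i j

end Semiring

variable [Fintype n] [CommSemiring R]

def PreservesRank (f : AddAut (Matrix m n R)) : Prop :=
  ∀ A : Matrix m n R, (f A).rank = A.rank

variable {f g : AddAut (Matrix m n R)}

theorem PreservesRank.add (hf : PreservesRank f) (hg : PreservesRank g) :
    PreservesRank (f + g) := fun A => (hf (g A)).trans (hg A)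

theorem PreservesRank.neg (hf : PreservesRank f) : PreservesRank (-f) := fun A => by
  conv_rhs => rw [← f.apply_symm_apply A]
  exact (hf _).symm

theorem preservesRank_galoisMatAut (γ : R ≃+* R) :
    PreservesRank (galoisMatAut γ : AddAut (Matrix m n R)) :=
  rank_map_ringEquiv γ

end MatrixAut

section Field

variable {F : Type*} [Field F] {l m : ℕ} {f : AddAut (Matrix (Fin l) (Fin m) F)}

theorem isSemilinearMatEquiv_iff :
    IsSemilinearMatEquiv f ↔ (∃ γ : F ≃+* F, IsSemilinearAut γ f) ∧ PreservesRank f :=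
  Iff.rfl

theorem isLinearMatEquiv_iff :
    IsLinearMatEquiv f ↔ IsSemilinearAut (RingEquiv.refl F) f ∧ PreservesRank f :=
  Iff.rfl

end Field

theorem slequiv_matrix_semidirect_general
    (F : Type*) [Field F]
    (l m : ℕ) :
    (∀ g n : AddAut (Matrix (Fin l) (Fin m) F), IsSemilinearMatEquiv g → IsLinearMatEquiv n →
        IsLinearMatEquiv (g + n + -g)) ∧
    (∀ f : AddAut (Matrix (Fin l) (Fin m) F), IsLinearMatEquiv f → IsGaloisMatMap f → f = 0) ∧
    (∀ f : AddAut (Matrix (Fin l) (Fin m) F), IsSemilinearMatEquiv f →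
        ∃ a b : AddAut (Matrix (Fin l) (Fin m) F),
          IsLinearMatEquiv a ∧ IsGaloisMatMap b ∧ f = a + b) := by
  simp only [isSemilinearMatEquiv_iff, isLinearMatEquiv_iff]
  refine ⟨?_, ?_, ?_⟩
  · rintro g n ⟨⟨γ, hg⟩, hg_rank⟩ ⟨hn, hn_rank⟩
    exact ⟨hg.add_add_neg hn, (hg_rank.add hn_rank).add hg_rank.neg⟩
  · rintro f ⟨hf, -⟩ ⟨γ, hγ⟩
    obtain rfl : f = galoisMatAut γ := AddEquiv.ext hγ
    exact galoisMatAut_eq_zero_of_isSemilinearAut_refl hf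
  · rintro f ⟨⟨γ, hf⟩, hf_rank⟩
    refine ⟨f + -galoisMatAut γ, galoisMatAut γ,
      ⟨?_, hf_rank.add (preservesRank_galoisMatAut γ).neg⟩, ⟨γ, fun _ => rfl⟩,
      (neg_add_cancel_right f _).symm⟩
    simpa using hf.add (isSemilinearAut_galoisMatAut γ).neg

/-- **`SLEquivMat` is the internal semidirect product `LEquivMat ⋊ Gal(F_q/F_p)`.**
Within the group of semi-linear matrix-equivalence maps of `F^{l×m}`:
the linear ones form a normal subgroup, the entrywise Galois maps intersect it
trivially, and every semi-linear matrix-equivalence map factors as a linear one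
followed by a Galois one. -/
theorem slequiv_matrix_semidirect
    (F : Type*) [Field F] [Fintype F] (p : ℕ) [Fact p.Prime] [CharP F p]
    (l m : ℕ) (hl : 0 < l) (hm : 0 < m) :
    (∀ g n : AddAut (Matrix (Fin l) (Fin m) F), IsSemilinearMatEquiv g → IsLinearMatEquiv n →
        IsLinearMatEquiv (g + n + -g)) ∧
    (∀ f : AddAut (Matrix (Fin l) (Fin m) F), IsLinearMatEquiv f → IsGaloisMatMap f → f = 0) ∧
    (∀ f : AddAut (Matrix (Fin l) (Fin m) F), IsSemilinearMatEquiv f →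
        ∃ a b : AddAut (Matrix (Fin l) (Fin m) F),
          IsLinearMatEquiv a ∧ IsGaloisMatMap b ∧ f = a + b) :=
  slequiv_matrix_semidirect_general F l m
end

section
/- Let F_q be a finite field with q elements, K a field extension of F_q of degree m, 1 ≤ k < l ≤ m, and g = (g_1,…,g_l) ∈ K^l a vector whose entries are linearly independent over F_q. Let C_{k,g} ⊆ K^l be the associated Gabidulin code, let W = span_{F_q}{g_1,…,g_l} ⊆ K, and let d be the largest positive integer such that W is a vector space over the subfield F_{q^d} ⊆ K with q^d elements (i.e., W is closed under multiplication by F_{q^d}). Then: (1) d divides gcd(l, m); and (2) for α ∈ K^× and L ∈ GL_l(F_q), the linear rank-metric-equivalence map x ↦ α·(x·L) maps C_{k,g} onto C_{k,g} if and only if there exists β ∈ F_{q^d}^× with g·L = β·g, i.e., if and only if L = M_β, where M_β ∈ GL_l(F_q) is the unique matrix over F_q satisfying g·M_β = β·g. -/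
/-!
The stabilizer `{β | β • W ⊆ W}` is an intermediate field of `K/F`. The intermediate fields of
an extension of finite fields are the fixed fields `{x | x ^ q ^ e = x}` of the powers of Frobenius,
one for each `e ∣ m`, so the maximal `d` is the degree of the stabilizer; `W` is a vector space
over it, whence `d ∣ l`.

Frobenius commutes with matrices over `F`, so `x ↦ α • x L` maps `C_{k,g}` onto `C_{k,gL}`. If
`C_{k,gL} = C_{k,g}`, every twist `(gL) ^ q ^ t`, `t < k`, lies in `C_{k,g}`. The rows
`g ^ q ^ i`, `i < l`, are `K`-linearly independent (Moore), so if `gL` is a combination of the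
first `n + 1` rows, twisting by `q ^ (k - n)` shows its top coefficient vanishes. Descending,
`gL = γ • g`, and `γ` stabilizes `W`.
-/

open Matrix Module Submodule

namespace FiniteField

variable {F : Type*} [Field F] [Fintype F]

local notation "q" => Fintype.card F

theorem frobeniusAlgHom_pow_apply (R : Type*) [CommRing R] [Algebra F R] (t : ℕ) (x : R) :
    (frobeniusAlgHom F R ^ t) x = x ^ q ^ t := by
  rw [AlgHom.coe_pow, coe_frobeniusAlgHom, pow_iterate]

theorem add_pow_card_pow {R : Type*} [CommRing R] [Algebra F R] (t : ℕ) (x y : R) :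
    (x + y) ^ q ^ t = x ^ q ^ t + y ^ q ^ t := by
  simpa only [frobeniusAlgHom_pow_apply] using map_add (frobeniusAlgHom F R ^ t) x y

variable {K : Type*} [Field K] [Algebra F K]

open Polynomial in
theorem mem_intermediateField_iff_pow_eq [Finite K] (E : IntermediateField F K) {x : K} :
    x ∈ E ↔ x ^ q ^ finrank F E = x := by
  have : Fintype E := Fintype.ofFinite E
  have hcard : Fintype.card E = q ^ finrank F E := card_eq_pow_finrank
  have hq1 : 1 < q ^ finrank F E := Nat.one_lt_pow finrank_pos.ne' Fintype.one_lt_card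
  have pow_eq_of_mem (y : K) (hy : y ∈ E) : y ^ q ^ finrank F E = y := by
    simpa [hcard] using congrArg Subtype.val (pow_card (⟨y, hy⟩ : E))
  refine ⟨pow_eq_of_mem x, fun hx => ?_⟩
  by_contra hxE
  -- `X ^ #E - X` would have the `#E + 1` roots `E ∪ {x}`.
  have hinj : Function.Injective fun y : Option E => y.elim x Subtype.val := by
    rintro (_ | ⟨a, ha⟩) (_ | ⟨b, hb⟩) h <;> aesop
  refine X_pow_card_sub_X_ne_zero K hq1
    (eq_zero_of_natDegree_lt_card_of_eval_eq_zero _ hinj ?_ ?_)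
  · rintro (_ | ⟨y, hy⟩)
    · simp [hx]
    · simp [pow_eq_of_mem y hy]
  · rw [X_pow_card_sub_X_natDegree_eq K hq1, Fintype.card_option, hcard]
    exact Nat.lt_succ_self _

theorem exists_intermediateField_finrank_eq [Finite K] {d : ℕ} (hd0 : 0 < d)
    (hd : d ∣ finrank F K) : ∃ E : IntermediateField F K, finrank F E = d := by
  obtain ⟨p, _⟩ := CharP.exists F
  have : Fact p.Prime := ⟨CharP.char_is_prime F p⟩
  have : NeZero d := ⟨hd0.ne'⟩
  obtain ⟨f⟩ := nonempty_algHom_of_finrank_dvd (K := Extension F p d) (L := K)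
    (by rwa [finrank_extension])
  exact ⟨f.fieldRange,
    (AlgEquiv.ofInjectiveField f).toLinearEquiv.finrank_eq.symm.trans (finrank_extension F p d)⟩

theorem isGreatest_finrank_intermediateField [Finite K] (E : IntermediateField F K) :
    IsGreatest {d | 0 < d ∧ d ∣ finrank F K ∧ ∀ x : K, x ^ q ^ d = x → x ∈ E}
      (finrank F E) := by
  refine ⟨⟨finrank_pos, ⟨finrank E K, (finrank_mul_finrank F E K).symm⟩,
    fun x hx => (mem_intermediateField_iff_pow_eq E).2 hx⟩, ?_⟩
  rintro d ⟨hd0, hdK, hdE⟩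
  obtain ⟨E', rfl⟩ := exists_intermediateField_finrank_eq hd0 hdK
  exact IntermediateField.finrank_le_of_le_right
    fun x hx => hdE x ((mem_intermediateField_iff_pow_eq E').1 hx)

end FiniteField

namespace Submodule

variable {F K : Type*} [Field F] [Field K] [Algebra F K] [Algebra.IsAlgebraic F K]

def mulStabilizer (W : Submodule F K) : IntermediateField F K :=
  let S : Subalgebra F K :=
    { carrier := {x | ∀ w ∈ W, x * w ∈ W}
      mul_mem' := fun {a b} ha hb w hw => mul_assoc a b w ▸ ha _ (hb w hw)
      add_mem' := fun {a b} ha hb w hw => (add_mul a b w).symm ▸ W.add_mem (ha w hw) (hb w hw)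
      algebraMap_mem' := fun c w hw => Algebra.smul_def c w ▸ W.smul_mem c hw }
  S.toIntermediateField fun x hx =>
    S.inv_mem_of_algebraic (x := ⟨x, hx⟩) (Algebra.IsAlgebraic.isAlgebraic x)

variable {W : Submodule F K}

theorem mem_mulStabilizer {x : K} : x ∈ W.mulStabilizer ↔ ∀ w ∈ W, x * w ∈ W := Iff.rfl

theorem mem_mulStabilizer_span_range_iff {ι : Type*} {g : ι → K} {x : K} :
    x ∈ (span F (Set.range g)).mulStabilizer ↔ ∀ j, x * g j ∈ span F (Set.range g) := by
  rw [mem_mulStabilizer]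
  refine ⟨fun h j => h _ (subset_span ⟨j, rfl⟩), fun h w hw => ?_⟩
  exact (span_le (p := (span F (Set.range g)).comap (LinearMap.mulLeft F x))).2
    (Set.range_subset_iff.2 h) hw

theorem finrank_mulStabilizer_dvd [FiniteDimensional F K] (W : Submodule F K) :
    finrank F W.mulStabilizer ∣ finrank F W := by
  let W' : Submodule W.mulStabilizer K :=
    { W.toAddSubmonoid with smul_mem' := fun c x hx => c.2 x hx }
  have tower : finrank F W = finrank F W.mulStabilizer * finrank W.mulStabilizer W' := by
    rw [finrank_mul_finrank]
    exact ((restrictScalarsEquiv F W.mulStabilizer K W').restrictScalars F).finrank_eq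
  exact Dvd.intro _ tower.symm

end Submodule

theorem vecMul_map_algebraMap_mem_span {R A ι ι' : Type*} [CommSemiring R] [CommSemiring A]
    [Algebra R A] [Fintype ι] (g : ι → A) (L : Matrix ι ι' R) (j : ι') :
    (g ᵥ* L.map (algebraMap R A)) j ∈ span R (Set.range g) := by
  simp only [Matrix.vecMul, dotProduct, Matrix.map_apply]
  refine sum_mem fun s _ => ?_
  rw [mul_comm, ← Algebra.smul_def]
  exact smul_mem _ _ (subset_span ⟨s, rfl⟩)

open FiniteField

section Gabidulin

variable {F K ι : Type*} [Fintype F] [Field K]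

local notation "q" => Fintype.card F

variable (F) in
def gabidulinCode (g : ι → K) (k : ℕ) : Submodule K (ι → K) :=
  span K ((fun i => g ^ q ^ i) '' Set.Iio k)

variable {g : ι → K} {k n : ℕ}

theorem pow_mem_gabidulinCode {i : ℕ} (hi : i < k) : g ^ q ^ i ∈ gabidulinCode F g k :=
  subset_span ⟨i, hi, rfl⟩

theorem gabidulinCode_eq_span_range :
    gabidulinCode F g k = span K (Set.range fun i : Fin k => g ^ q ^ (i : ℕ)) := by
  rw [gabidulinCode, ← Fin.range_val, ← Set.range_comp]
  rfl

theorem gabidulinCode_one : gabidulinCode F g 1 = K ∙ g := by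
  simp [gabidulinCode]

theorem mem_gabidulinCode_succ {x : ι → K} :
    x ∈ gabidulinCode F g (n + 1) ↔
      ∃ a : K, ∃ y ∈ gabidulinCode F g n, x = a • g ^ q ^ n + y := by
  rw [gabidulinCode, Set.Iio_add_one_eq_Iic, ← Set.Iio_insert, Set.image_insert_eq,
    mem_span_insert]
  rfl

theorem gabidulinCode_smul_le (β : K) : gabidulinCode F (β • g) k ≤ gabidulinCode F g k :=
  span_le.2 <| by
    rintro _ ⟨i, hi, rfl⟩
    dsimp only
    rw [smul_pow]
    exact smul_mem _ _ (pow_mem_gabidulinCode hi)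

theorem gabidulinCode_smul {β : K} (hβ : β ≠ 0) :
    gabidulinCode F (β • g) k = gabidulinCode F g k :=
  le_antisymm (gabidulinCode_smul_le β) <| by
    simpa [inv_smul_smul₀ hβ] using gabidulinCode_smul_le (g := β • g) β⁻¹

variable [Field F] [Algebra F K]

theorem pow_card_pow_mem_gabidulinCode {x : ι → K} (hx : x ∈ gabidulinCode F g n) (t : ℕ) :
    x ^ q ^ t ∈ gabidulinCode F g (n + t) := by
  induction hx using span_induction with
  | mem x hx =>
    obtain ⟨i, hi, rfl⟩ := hx
    rw [← pow_mul, ← pow_add]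
    exact pow_mem_gabidulinCode (Nat.add_lt_add_right hi t)
  | zero => rw [zero_pow (by positivity)]; exact zero_mem _
  | add x y _ _ hx hy => rw [add_pow_card_pow]; exact add_mem hx hy
  | smul a x _ hx => rw [smul_pow]; exact smul_mem _ _ hx

open Polynomial in
theorem linearIndepOn_pow_card_pow [Fintype ι] (hg : LinearIndependent F g) :
    LinearIndepOn K (fun i => g ^ q ^ i) (Set.Iio (Fintype.card ι)) := by
  classical
  rw [linearIndepOn_iff']
  intro t c ht hsum i hi
  let P : K[X] := ∑ j ∈ t, C (c j) * X ^ q ^ j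
  have eval_P (x : K) : P.eval x = ∑ j ∈ t, c j * x ^ q ^ j := by simp [P, eval_finsetSum]
  -- `P` is `q`-linearized, so it vanishes on the whole `F`-span of the `g j`.
  let Λ : K →ₗ[F] K := ∑ j ∈ t, c j • (frobeniusAlgHom F K ^ j).toLinearMap
  have hΛ (x : K) : Λ x = P.eval x := by
    simp only [Λ, LinearMap.sum_apply, LinearMap.smul_apply,
      AlgHom.toLinearMap_apply, frobeniusAlgHom_pow_apply, smul_eq_mul, eval_P]
  have span_le_ker : span F (Set.range g) ≤ LinearMap.ker Λ :=
    span_le.2 <| Set.range_subset_iff.2 fun j => by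
      simpa [hΛ, eval_P, Finset.sum_apply] using congrFun hsum j
  have := FiniteDimensional.span_of_finite F (Set.finite_range g)
  have : Finite (span F (Set.range g)) := Module.finite_of_finite F
  have : Fintype (span F (Set.range g)) := Fintype.ofFinite _
  have hq : 1 < q := Fintype.one_lt_card
  have natDegree_P : P.natDegree < Fintype.card (span F (Set.range g)) := by
    rw [card_eq_pow_finrank (K := F), finrank_span_eq_card hg]
    have natDegree_le (j : ℕ) (hj : j ∈ t) :
        (C (c j) * X ^ q ^ j).natDegree ≤ q ^ (Fintype.card ι - 1) :=
      (natDegree_C_mul_X_pow_le _ _).trans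
        (Nat.pow_le_pow_right hq.le (Nat.le_sub_one_of_lt (ht hj)))
    exact (natDegree_sum_le_of_forall_le _ _ natDegree_le).trans_lt
      (Nat.pow_lt_pow_right hq (Nat.sub_lt (Nat.zero_lt_of_lt (ht hi)) one_pos))
  have hP : P = 0 := eq_zero_of_natDegree_lt_card_of_eval_eq_zero P Subtype.val_injective
    (fun w => by rw [← hΛ]; exact span_le_ker w.2) natDegree_P
  simpa [P, finsetSum_coeff, coeff_C_mul_X_pow, (Nat.pow_right_injective hq).eq_iff, hi] using
    congrArg (coeff · (q ^ i)) hP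

theorem pow_card_pow_notMem_gabidulinCode [Fintype ι] (hg : LinearIndependent F g)
    (hk : k < Fintype.card ι) : g ^ q ^ k ∉ gabidulinCode F g k := by
  have hind := linearIndepOn_pow_card_pow (K := K) hg
  refine ((hind.mono ?_).notMem_span_iff).2 ⟨hind.mono ?_, Set.self_notMem_Iio⟩
  · exact Set.Iio_subset_Iio hk.le
  · rw [Set.Iio_insert, ← Set.Iio_add_one_eq_Iic]; exact Set.Iio_subset_Iio hk

theorem mem_gabidulinCode_of_pow_card_pow_mem [Fintype ι] (hg : LinearIndependent F g) {t : ℕ}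
    (hnt : n + t < Fintype.card ι) {x : ι → K} (hx : x ∈ gabidulinCode F g (n + 1))
    (hxt : x ^ q ^ t ∈ gabidulinCode F g (n + t)) : x ∈ gabidulinCode F g n := by
  obtain ⟨a, y, hy, rfl⟩ := mem_gabidulinCode_succ.1 hx
  have hsplit : (a • g ^ q ^ n + y) ^ q ^ t = a ^ q ^ t • g ^ q ^ (n + t) + y ^ q ^ t := by
    rw [add_pow_card_pow, smul_pow, ← pow_mul, ← pow_add]
  have top_mem : a ^ q ^ t • g ^ q ^ (n + t) ∈ gabidulinCode F g (n + t) := by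
    simpa [hsplit] using sub_mem hxt (pow_card_pow_mem_gabidulinCode hy t)
  obtain rfl : a = 0 := by
    by_contra ha
    exact pow_card_pow_notMem_gabidulinCode hg hnt
      ((smul_mem_iff _ (pow_ne_zero _ ha)).1 top_mem)
  simpa using hy

theorem exists_eq_smul_of_pow_card_pow_mem [Fintype ι] (hg : LinearIndependent F g) (hk : 0 < k)
    (hkl : k < Fintype.card ι) {u : ι → K} (hu : ∀ t < k, u ^ q ^ t ∈ gabidulinCode F g k) :
    ∃ γ : K, u = γ • g := by
  have mem_of_lt (j : ℕ) (hj : j < k) : u ∈ gabidulinCode F g (k - j) := by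
    induction j with
    | zero => simpa using hu 0 hk
    | succ j ih =>
      refine mem_gabidulinCode_of_pow_card_pow_mem hg (n := k - (j + 1)) (t := j + 1) (by omega)
        ?_ ?_
      · rw [show k - (j + 1) + 1 = k - j by omega]; exact ih (by omega)
      · rw [show k - (j + 1) + (j + 1) = k by omega]; exact hu _ hj
  have := mem_of_lt (k - 1) (by omega)
  rw [show k - (k - 1) = 1 by omega, gabidulinCode_one, mem_span_singleton] at this
  obtain ⟨γ, hγ⟩ := this
  exact ⟨γ, hγ.symm⟩

variable {ι' : Type*} [Fintype ι]

theorem pow_card_pow_vecMul (x : ι → K) (L : Matrix ι ι' F) (t : ℕ) :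
    (x ᵥ* L.map (algebraMap F K)) ^ q ^ t = x ^ q ^ t ᵥ* L.map (algebraMap F K) := by
  funext j
  simp only [Pi.pow_apply, vecMul, dotProduct, Matrix.map_apply,
    ← frobeniusAlgHom_pow_apply (F := F) K, map_sum, map_mul, AlgHom.commutes]

theorem map_vecMulLinear_gabidulinCode (L : Matrix ι ι' F) :
    (gabidulinCode F g k).map (Matrix.vecMulLinear (L.map (algebraMap F K))) =
      gabidulinCode F (g ᵥ* L.map (algebraMap F K)) k := by
  simp only [gabidulinCode, map_span, Set.image_image, Matrix.coe_vecMulLinear,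
    pow_card_pow_vecMul]

theorem image_smul_vecMul_gabidulinCode {α : K} (hα : α ≠ 0) (L : Matrix ι ι' F) :
    (fun x => α • x ᵥ* L.map (algebraMap F K)) '' gabidulinCode F g k =
      gabidulinCode F (g ᵥ* L.map (algebraMap F K)) k := by
  rw [← map_vecMulLinear_gabidulinCode, ← Submodule.map_smul _ _ α hα, map_coe]
  rfl

end Gabidulin

theorem gabidulin_rank_metric_automorphisms_general
    {F K : Type*} [Field F] [Fintype F] [Field K] [Fintype K] [Algebra F K]
    {m k l : ℕ} (hm : Module.finrank F K = m)
    (hk : 1 ≤ k) (hkl : k < l)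
    (g : Fin l → K) (hg : LinearIndependent F g)
    (C : Submodule K (Fin l → K))
    (hC : C = Submodule.span K
      (Set.range fun i : Fin k => fun j => g j ^ Fintype.card F ^ (i : ℕ)))
    (W : Submodule F K) (hW : W = Submodule.span F (Set.range g))
    (d : ℕ) (hd0 : 0 < d) (hdm : d ∣ m)
    (hdW : ∀ β : K, β ^ Fintype.card F ^ d = β → ∀ w ∈ W, β * w ∈ W)
    (hdmax : ∀ d' : ℕ, 0 < d' → d' ∣ m →
      (∀ β : K, β ^ Fintype.card F ^ d' = β → ∀ w ∈ W, β * w ∈ W) → d' ≤ d) :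
    d ∣ Nat.gcd l m ∧
    ∀ (α : Kˣ) (L : GL (Fin l) F),
      ((fun x => (α : K) •
          Matrix.vecMul x ((L : Matrix (Fin l) (Fin l) F).map (algebraMap F K))) ''
            (C : Set (Fin l → K)) = (C : Set (Fin l → K)))
        ↔ ∃ β : K, β ≠ 0 ∧ β ^ Fintype.card F ^ d = β ∧
            Matrix.vecMul g ((L : Matrix (Fin l) (Fin l) F).map (algebraMap F K)) = β • g := by
  subst hm hW
  obtain rfl : C = gabidulinCode F g k := hC.trans gabidulinCode_eq_span_range.symm
  have hstab : finrank F (span F (Set.range g)).mulStabilizer = d :=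
    (isGreatest_finrank_intermediateField _).unique
      ⟨⟨hd0, hdm, hdW⟩, fun d' ⟨hd'0, hd'm, hd'W⟩ => hdmax d' hd'0 hd'm hd'W⟩
  refine ⟨Nat.dvd_gcd ?_ hdm, fun α L => ?_⟩
  · simpa [hstab, finrank_span_eq_card hg] using finrank_mulStabilizer_dvd (span F (Set.range g))
  rw [image_smul_vecMul_gabidulinCode α.ne_zero, SetLike.coe_set_eq]
  constructor
  · intro hcode
    obtain ⟨γ, hγ⟩ := exists_eq_smul_of_pow_card_pow_mem hg hk (by simpa using hkl)
      fun t ht => hcode ▸ pow_mem_gabidulinCode ht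
    have hγ0 : γ ≠ 0 := by
      rintro rfl
      have hL : IsUnit (L.1.map (algebraMap F K)) := L.isUnit.map (algebraMap F K).mapMatrix
      have hg0 : g = 0 := vecMul_injective_iff_isUnit.2 hL (by simp [hγ])
      exact hg.ne_zero ⟨0, by omega⟩ (congrFun hg0 _)
    have hγW : γ ∈ (span F (Set.range g)).mulStabilizer :=
      mem_mulStabilizer_span_range_iff.2 fun j => by
        simpa only [hγ, Pi.smul_apply, smul_eq_mul] using vecMul_map_algebraMap_mem_span g L.1 j
    exact ⟨γ, hγ0, hstab ▸ (mem_intermediateField_iff_pow_eq _).1 hγW, hγ⟩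
  · rintro ⟨β, hβ0, -, hβ⟩
    rw [hβ, gabidulinCode_smul hβ0]

/-- **The linear rank-metric automorphism group of a Gabidulin code.**
Let `g ∈ K^l` be a Gabidulin vector (entries `F`-linearly independent), `C = C_{k,g}` the
Gabidulin code spanned over `K` by the rows `(g_j^{q^i})_j`, `0 ≤ i < k`, and let
`W = span_F {g_1, …, g_l}`.  Let `d` be the largest positive integer such that `W` is a
vector space over the subfield `F_{q^d} ⊆ K` (elements of `F_{q^d}` are exactly the
`β ∈ K` with `β^{q^d} = β`).  Then `d ∣ gcd(l, m)`, and a linear rank-metric-equivalence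
map `x ↦ α • (x · L)` (`α ∈ K^×`, `L ∈ GL_l(F)`) maps `C` onto `C` if and only if
`g · L = β • g` for some `β ∈ F_{q^d}^×`. -/
theorem gabidulin_rank_metric_automorphisms
    {F K : Type*} [Field F] [Fintype F] [Field K] [Fintype K] [Algebra F K]
    {m k l : ℕ} (hm : Module.finrank F K = m)
    (hk : 1 ≤ k) (hkl : k < l) (hlm : l ≤ m)
    (g : Fin l → K) (hg : LinearIndependent F g)
    (C : Submodule K (Fin l → K))
    (hC : C = Submodule.span K
      (Set.range fun i : Fin k => fun j => g j ^ Fintype.card F ^ (i : ℕ)))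
    (W : Submodule F K) (hW : W = Submodule.span F (Set.range g))
    (d : ℕ) (hd0 : 0 < d) (hdm : d ∣ m)
    (hdW : ∀ β : K, β ^ Fintype.card F ^ d = β → ∀ w ∈ W, β * w ∈ W)
    (hdmax : ∀ d' : ℕ, 0 < d' → d' ∣ m →
      (∀ β : K, β ^ Fintype.card F ^ d' = β → ∀ w ∈ W, β * w ∈ W) → d' ≤ d) :
    d ∣ Nat.gcd l m ∧
    ∀ (α : Kˣ) (L : GL (Fin l) F),
      ((fun x => (α : K) •
          Matrix.vecMul x ((L : Matrix (Fin l) (Fin l) F).map (algebraMap F K))) ''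
            (C : Set (Fin l → K)) = (C : Set (Fin l → K)))
        ↔ ∃ β : K, β ≠ 0 ∧ β ^ Fintype.card F ^ d = β ∧
            Matrix.vecMul g ((L : Matrix (Fin l) (Fin l) F).map (algebraMap F K)) = β • g :=
  gabidulin_rank_metric_automorphisms_general hm hk hkl g hg C hC W hW d hd0 hdm hdW hdmax
end
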